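/- arXiv:1411.7575 — 9 statements merged into one kernel-verified Lean document; each statement's English description precedes it below -/
import Mathlib

section
/- Let n ≥ 11 and let G be a finite group isomorphic to the alternating group Alt(n) or to the symmetric group Sym(n). Then there is no finite set Ω with a G-action such that (G, Ω) satisfies Hypothesis (3fix). -/
/-!
Realize `G` as a group `H` with `Alt(n) ≤ H ≤ Sym(n)`. If a nontrivial element whose support
misses at least five points fixed some point, every three-cycle would fix it, hence by
transitivity every point, contradicting faithfulness; so elements of small support act without
fixed points. Consequently a small element commuting with a nontrivial `h` that fixes three
points `a, b, c` has to rotate `{a, b, c}` and so has order three. This forces every prime-order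
such `h` to be a `p`-cycle with `p ≥ n - 3`. Finally, an even permutation of order `(p - 1) / 2`
normalizing `⟨h⟩` permutes `{a, b, c}`, so its square or cube fixes `a, b, c`; but its order is
far too small for that.
-/

/-- Hypothesis (3fix): the action of `G` on `Ω` is faithful and transitive, every element
of `G` fixing at least four distinct points of `Ω` is the identity, and some nontrivial
element of `G` fixes at least three distinct points of `Ω`. -/
def Hyp3fix (G : Type*) [Group G] (Ω : Type*) [MulAction G Ω] : Prop :=
  MulAction.IsPretransitive G Ω ∧
  (∀ g : G, (∀ ω : Ω, g • ω = ω) → g = 1) ∧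
  (∀ g : G, ∀ a b c d : Ω, a ≠ b → a ≠ c → a ≠ d → b ≠ c → b ≠ d → c ≠ d →
      g • a = a → g • b = b → g • c = c → g • d = d → g = 1) ∧
  (∃ g : G, g ≠ 1 ∧ ∃ a b c : Ω, a ≠ b ∧ a ≠ c ∧ b ≠ c ∧
      g • a = a ∧ g • b = b ∧ g • c = c)

open Equiv Equiv.Perm

section Perm

variable {α β : Type*}

theorem Equiv.addRight_one_pow {R : Type*} [AddGroupWithOne R] (k : ℕ) :
    Equiv.addRight (1 : R) ^ k = Equiv.addRight (k : R) := by
  induction k with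
  | zero => ext; simp
  | succ k ih => ext x; simp [pow_succ', ih, add_assoc]

theorem Equiv.Perm.viaEmbedding_swap [DecidableEq α] [DecidableEq β] (ι : β ↪ α) (i j : β) :
    (swap i j).viaEmbedding ι = swap (ι i) (ι j) := by
  ext t
  by_cases ht : t ∈ Set.range ι
  · obtain ⟨s, rfl⟩ := ht
    rw [viaEmbedding_apply, ι.injective.swap_apply]
  · rw [viaEmbedding_apply_of_notMem _ _ _ ht, swap_apply_of_ne_of_ne] <;>
      rintro rfl <;> exact ht ⟨_, rfl⟩

theorem Equiv.Perm.commute_viaEmbedding (σ : Perm β) (ι : β ↪ α) {x : Perm α}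
    (hx : ∀ i, x (ι i) = ι i) : Commute (σ.viaEmbedding ι) x :=
  Disjoint.commute fun t => by
    by_cases ht : t ∈ Set.range ι
    · obtain ⟨i, rfl⟩ := ht
      exact Or.inr (hx i)
    · exact Or.inl (viaEmbedding_apply_of_notMem _ _ _ ht)

variable [DecidableEq α] [Fintype α]

theorem Equiv.Perm.sign_viaEmbedding [DecidableEq β] [Fintype β] (σ : Perm β) (ι : β ↪ α) :
    sign (σ.viaEmbedding ι) = sign σ := by
  unfold viaEmbedding
  convert sign_extendDomain σ _

theorem Equiv.Perm.card_support_viaEmbedding_le [Fintype β] (σ : Perm β) (ι : β ↪ α) :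
    (σ.viaEmbedding ι).support.card ≤ Fintype.card β := by
  calc (σ.viaEmbedding ι).support.card ≤ (Finset.univ.map ι).card := by
        refine Finset.card_le_card fun t ht => ?_
        by_contra hnot
        refine mem_support.mp ht (viaEmbedding_apply_of_notMem _ _ _ ?_)
        rintro ⟨i, rfl⟩
        exact hnot (Finset.mem_map_of_mem _ (Finset.mem_univ i))
    _ = Fintype.card β := by simp

theorem Finset.exists_embedding_forall_notMem (s : Finset α) {k : ℕ}
    (h : s.card + k ≤ Fintype.card α) : ∃ ι : Fin k ↪ α, ∀ i, ι i ∉ s := by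
  have : Fintype.card (Fin k) ≤ Fintype.card (sᶜ : Finset α) := by
    rw [Fintype.card_fin, Fintype.card_coe, Finset.card_compl]
    omega
  obtain ⟨ι⟩ := Function.Embedding.nonempty_of_card_le this
  exact ⟨ι.trans (Function.Embedding.subtype _), fun i => Finset.mem_compl.mp (ι i).2⟩

theorem Equiv.Perm.exists_isThreeCycle_support_disjoint (s : Finset α)
    (h : s.card + 3 ≤ Fintype.card α) :
    ∃ t : Perm α, t.IsThreeCycle ∧ _root_.Disjoint t.support s := by
  obtain ⟨ι, hι⟩ := s.exists_embedding_forall_notMem h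
  have hnodup : [ι 0, ι 1, ι 2].Nodup := by simp [ι.injective.eq_iff]
  refine ⟨swap (ι 0) (ι 1) * swap (ι 1) (ι 2), ?_, ?_⟩
  · rw [← card_support_eq_three_iff, support_swap_mul_swap hnodup]
    exact Finset.card_eq_three.mpr ⟨_, _, _, ι.injective.ne (by decide),
      ι.injective.ne (by decide), ι.injective.ne (by decide), rfl⟩
  · rw [support_swap_mul_swap hnodup, Finset.disjoint_left]
    simp only [Finset.mem_insert, Finset.mem_singleton]
    rintro _ (rfl | rfl | rfl) <;> apply hι

theorem Equiv.Perm.IsThreeCycle.exists_viaEmbedding {g : Perm α} (hg : g.IsThreeCycle)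
    (s : Finset α) (hs : _root_.Disjoint g.support s) (h : s.card + 5 ≤ Fintype.card α) :
    ∃ ι : Fin 5 ↪ α, (∀ i, ι i ∉ s) ∧
      (swap 0 1 * swap 1 2 : Perm (Fin 5)).viaEmbedding ι = g := by
  obtain ⟨a, ha⟩ := Finset.card_pos.mp (hg.card_support ▸ three_pos)
  obtain ⟨κ, hκ⟩ := (s ∪ g.support).exists_embedding_forall_notMem (k := 2) (by
    have := Finset.card_union_le s g.support
    rw [hg.card_support] at this
    omega)
  have hmem : ∀ t ∈ [a, g a, g (g a)], t ∈ g.support := by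
    simpa [apply_mem_support] using ha
  have hnodup : [a, g a, g (g a), κ 0, κ 1].Nodup := by
    have h3 := (hg.nodup_iff_mem_support).mpr ha
    have h0 := hκ 0
    have h1 := hκ 1
    simp only [Finset.mem_union, not_or] at h0 h1
    simp only [List.nodup_cons, List.mem_cons, List.not_mem_nil, or_false] at h3 ⊢
    grind
  refine ⟨⟨[a, g a, g (g a), κ 0, κ 1].get, List.nodup_iff_injective_get.mp hnodup⟩, ?_, ?_⟩
  · intro i
    fin_cases i
    iterate 3 exact Finset.disjoint_left.mp hs (hmem _ (by simp))
    all_goals exact fun h => hκ _ (Finset.mem_union_left _ h)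
  · rw [← viaEmbeddingHom_apply, map_mul, viaEmbeddingHom_apply, viaEmbeddingHom_apply,
      viaEmbedding_swap, viaEmbedding_swap]
    exact (hg.eq_swap_mul_swap_iff_mem_support.mpr ha).symm

end Perm

section Cycle

variable {α : Type*} [DecidableEq α] [Fintype α]

theorem Equiv.Perm.IsCycle.exists_zmod_equiv_support {h : Perm α} (hh : h.IsCycle) :
    ∃ ε : ZMod (orderOf h) ≃ h.support, (Equiv.addRight 1).extendDomain ε = h := by
  let g : Subgroup.zpowers h := ⟨h, Subgroup.mem_zpowers h⟩
  have hg : ∀ y, y ∈ Subgroup.zpowers g := by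
    rintro ⟨_, k, rfl⟩
    exact ⟨k, Subtype.ext (by simp [g])⟩
  let φ := zmodMulEquivOfGenerator hg (Nat.card_zpowers h)
  let ε := (Multiplicative.ofAdd.trans φ.toEquiv).trans hh.zpowersEquivSupport
  have hε : ∀ i, (ε (i + 1) : α) = h (ε i) := by
    intro i
    have : φ (Multiplicative.ofAdd (i + 1)) = g * φ (Multiplicative.ofAdd i) := by
      rw [add_comm, ofAdd_add, map_mul, zmodMulEquivOfGenerator_apply_ofAdd_one]
    simp only [ε, Equiv.trans_apply, MulEquiv.toEquiv_eq_coe, MulEquiv.coe_toEquiv, this]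
    rfl
  refine ⟨ε, ?_⟩
  ext t
  by_cases ht : t ∈ h.support
  · obtain ⟨i, hi⟩ := ε.surjective ⟨t, ht⟩
    obtain rfl : (ε i : α) = t := congrArg Subtype.val hi
    rw [extendDomain_apply_image, coe_addRight, hε]
  · rw [extendDomain_apply_not_subtype _ _ ht, notMem_support.mp ht]

theorem Equiv.Perm.IsCycle.exists_sign_eq_one_normalizing {h : Perm α} (hh : h.IsCycle)
    (hp : (orderOf h).Prime) (hp2 : orderOf h ≠ 2) :
    ∃ u : Perm α, Perm.sign u = 1 ∧ orderOf u = (orderOf h - 1) / 2 ∧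
      ∃ k : ℕ, h * u = u * h ^ k := by
  set q := orderOf h
  have := Fact.mk hp
  obtain ⟨ε, hε⟩ := hh.exists_zmod_equiv_support
  let Φ := (extendDomainHom ε).comp (MulAction.toPermHom (ZMod q)ˣ (ZMod q))
  have hΦ : Function.Injective Φ :=
    (extendDomainHom_injective ε).comp MulAction.toPerm_injective
  obtain ⟨w, hw⟩ := IsCyclic.exists_generator (α := (ZMod q)ˣ)
  have hwq : orderOf w = q - 1 := by
    rw [orderOf_eq_card_of_forall_mem_zpowers hw, Nat.card_eq_fintype_card, ZMod.card_units]
  have hw2 : 2 ∣ orderOf w := hwq ▸ (hp.even_sub_one hp2).two_dvd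
  -- `u` multiplies the coordinate `i ∈ ZMod q` of the support by the square `w ^ 2`; being a
  -- square, it is even, and it conjugates `h = (· + 1)` to `(· + w⁻²)`, a power of `h`.
  refine ⟨Φ (w ^ 2), by rw [map_pow, map_pow]; exact Int.units_sq _,
    by rw [orderOf_injective Φ hΦ, orderOf_pow_of_dvd two_ne_zero hw2, hwq],
    (((w ^ 2)⁻¹ : (ZMod q)ˣ) : ZMod q).val, ?_⟩
  rw [← hε, ← extendDomainHom_apply, ← map_pow, MonoidHom.comp_apply, ← map_mul, ← map_mul,
    addRight_one_pow]
  congr 1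
  ext x
  simp [Units.smul_def]

theorem Equiv.Perm.exists_disjoint_cycles_of_prime_orderOf {σ : Perm α}
    (hσ : (orderOf σ).Prime) (hnc : ¬ σ.IsCycle) :
    ∃ f₁ f₂ : Perm α, f₁.IsCycle ∧ f₂.IsCycle ∧ f₁.Disjoint f₂ ∧ Commute f₁ σ ∧ Commute f₂ σ ∧
      f₁.support.card = orderOf σ ∧ f₂.support.card = orderOf σ := by
  obtain ⟨k, hk⟩ := cycleType_prime_order hσ
  have hcard : Multiset.card σ.cycleType = σ.cycleFactorsFinset.card := by
    rw [cycleType_def, Multiset.card_map]; rfl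
  have hk0 : k ≠ 0 := by
    rintro rfl
    exact hnc (card_cycleType_eq_one.mp (by rw [hk, Multiset.card_replicate]))
  obtain ⟨f₁, hf₁, f₂, hf₂, hne⟩ := Finset.one_lt_card.mp
    (by rw [← hcard, hk, Multiset.card_replicate]; omega : 1 < σ.cycleFactorsFinset.card)
  have hcard_eq : ∀ f ∈ σ.cycleFactorsFinset, f.support.card = orderOf σ := fun f hf =>
    Multiset.eq_of_mem_replicate (hk ▸ cycleType_def σ ▸ Multiset.mem_map_of_mem _ hf)
  exact ⟨f₁, f₂, (mem_cycleFactorsFinset_iff.mp hf₁).1, (mem_cycleFactorsFinset_iff.mp hf₂).1,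
    cycleFactorsFinset_pairwise_disjoint σ hf₁ hf₂ hne, self_mem_cycle_factors_commute hf₁,
    self_mem_cycle_factors_commute hf₂, hcard_eq f₁ hf₁, hcard_eq f₂ hf₂⟩

end Cycle

theorem exists_pow_prime_orderOf {G : Type*} [Group G] [Finite G] {x : G} (hx : x ≠ 1) :
    ∃ k, (orderOf (x ^ k)).Prime ∧ orderOf (x ^ k) ∣ orderOf x := by
  have hp : (orderOf x).minFac.Prime := Nat.minFac_prime (orderOf_eq_one_iff.not.mpr hx)
  refine ⟨orderOf x / (orderOf x).minFac, ?_⟩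
  rw [orderOf_pow_orderOf_div (orderOf_pos x).ne' (Nat.minFac_dvd _)]
  exact ⟨hp, Nat.minFac_dvd _⟩

section Action

def FourPointStabilizersTrivial (G Ω : Type*) [Group G] [MulAction G Ω] : Prop :=
  ∀ g : G, ∀ a b c d : Ω, a ≠ b → a ≠ c → a ≠ d → b ≠ c → b ≠ d → c ≠ d →
    g • a = a → g • b = b → g • c = c → g • d = d → g = 1

variable {G Ω : Type*} [Group G] [MulAction G Ω]

def FixesThreePoints (x : G) (a b c : Ω) : Prop :=
  a ≠ b ∧ a ≠ c ∧ b ≠ c ∧ x • a = a ∧ x • b = b ∧ x • c = c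

theorem FixesThreePoints.pow {x : G} {a b c : Ω} (h : FixesThreePoints x a b c) (k : ℕ) :
    FixesThreePoints (x ^ k) a b c := by
  obtain ⟨hab, hac, hbc, ha, hb, hc⟩ := h
  have hfix : ∀ ω : Ω, x • ω = ω → x ^ k • ω = ω := fun ω hω =>
    pow_mem (MulAction.mem_stabilizer_iff.mpr hω) k
  exact ⟨hab, hac, hbc, hfix a ha, hfix b hb, hfix c hc⟩

theorem smul_cases_of_three {y : G} {a b c : Ω} (hab : a ≠ b) (hac : a ≠ c) (hbc : b ≠ c)
    (ha : y • a = a ∨ y • a = b ∨ y • a = c) (hb : y • b = a ∨ y • b = b ∨ y • b = c)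
    (hc : y • c = a ∨ y • c = b ∨ y • c = c) :
    ((y • a = a ∨ y • b = b ∨ y • c = c) ∧ FixesThreePoints (y ^ 2) a b c) ∨
      (y • a = b ∧ y • b = c ∧ y • c = a) ∨ (y • a = c ∧ y • b = a ∧ y • c = b) := by
  have hinj : ∀ {u v : Ω}, y • u = y • v → u = v := (smul_left_cancel_iff y).mp
  simp only [FixesThreePoints, sq, mul_smul]
  grind

theorem fixesThreePoints_pow_three {y : G} {a b c : Ω} (hab : a ≠ b) (hac : a ≠ c)
    (hbc : b ≠ c)
    (h : (y • a = b ∧ y • b = c ∧ y • c = a) ∨ (y • a = c ∧ y • b = a ∧ y • c = b)) :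
    FixesThreePoints (y ^ 3) a b c := by
  simp only [FixesThreePoints, pow_succ, pow_zero, one_mul, mul_smul]
  rcases h with ⟨ha, hb, hc⟩ | ⟨ha, hb, hc⟩ <;> simp [*]

namespace FourPointStabilizersTrivial

/-- The orbit of `ω` under `σ` has `p ≥ 4` points, all fixed by `x`. -/
theorem smul_eq_self_of_commute (h4 : FourPointStabilizersTrivial G Ω) {x σ : G} (hx : x ≠ 1)
    {ω : Ω} (hxω : x • ω = ω) {p : ℕ} (hp : p.Prime) (hp4 : 4 ≤ p) (hσ : σ ^ p = 1)
    (hσx : Commute σ x) : σ • ω = ω := by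
  by_contra hne
  have hperiod : MulAction.period σ ω = p := by
    have hdvd := MulAction.pow_smul_eq_iff_period_dvd.mp (by rw [hσ, one_smul] : σ ^ p • ω = ω)
    exact (hp.eq_one_or_self_of_dvd _ hdvd).resolve_left (MulAction.period_eq_one_iff.not.mpr hne)
  have hdistinct : ∀ i j, i < j → j < p → σ ^ i • ω ≠ σ ^ j • ω := by
    intro i j hij hjp heq
    have : σ ^ (j - i) • ω = ω := by
      apply smul_left_cancel (σ ^ i)
      rw [smul_smul, ← pow_add, Nat.add_sub_cancel' hij.le, heq]
    have := Nat.le_of_dvd (by omega) (hperiod ▸ MulAction.pow_smul_eq_iff_period_dvd.mp this)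
    omega
  have hfix : ∀ i, x • σ ^ i • ω = σ ^ i • ω := fun i => by
    rw [smul_smul, ← (hσx.pow_left i).eq, mul_smul, hxω]
  exact hx (h4 x _ _ _ _ (hdistinct 0 1 (by omega) (by omega))
    (hdistinct 0 2 (by omega) (by omega)) (hdistinct 0 3 (by omega) (by omega))
    (hdistinct 1 2 (by omega) (by omega)) (hdistinct 1 3 (by omega) (by omega))
    (hdistinct 2 3 (by omega) (by omega)) (hfix 0) (hfix 1) (hfix 2) (hfix 3))

theorem eq_or_eq_or_eq (h4 : FourPointStabilizersTrivial G Ω) {x : G} (hx : x ≠ 1)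
    {a b c : Ω} (habc : FixesThreePoints x a b c) {ω : Ω} (hω : x • ω = ω) :
    ω = a ∨ ω = b ∨ ω = c := by
  obtain ⟨hab, hac, hbc, ha, hb, hc⟩ := habc
  by_contra! h
  exact hx (h4 x ω a b c h.1 h.2.1 h.2.2 hab hac hbc hω ha hb hc)

theorem smul_cases_of_mul_eq_mul_pow (h4 : FourPointStabilizersTrivial G Ω) {x : G}
    (hx : x ≠ 1) {a b c : Ω} (habc : FixesThreePoints x a b c) {y : G} {k : ℕ}
    (hy : x * y = y * x ^ k) :
    ((y • a = a ∨ y • b = b ∨ y • c = c) ∧ FixesThreePoints (y ^ 2) a b c) ∨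
      (y • a = b ∧ y • b = c ∧ y • c = a) ∨ (y • a = c ∧ y • b = a ∧ y • c = b) := by
  have hmaps : ∀ ω, x • ω = ω → y • ω = a ∨ y • ω = b ∨ y • ω = c := fun ω hω =>
    h4.eq_or_eq_or_eq hx habc <| by
      have hxk : x ^ k • ω = ω := pow_mem (MulAction.mem_stabilizer_iff.mpr hω) k
      rw [smul_smul, hy, mul_smul, hxk]
  obtain ⟨hab, hac, hbc, ha, hb, hc⟩ := habc
  exact smul_cases_of_three hab hac hbc (hmaps a ha) (hmaps b hb) (hmaps c hc)

end FourPointStabilizersTrivial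

end Action

section Subgroup

variable {α : Type*} [DecidableEq α] [Fintype α] {H : Subgroup (Perm α)} {Ω : Type*}
  [MulAction H Ω]

namespace FourPointStabilizersTrivial

/-- In `Sym(5)`, `(0 1 2) = (0 3 2 4 1) (0 4 2 1 3)`. Transported to five points fixed by `x`,
both five-cycles commute with `x`, hence fix `ω`. -/
theorem smul_eq_self_of_disjoint (h4 : FourPointStabilizersTrivial H Ω)
    (hH : alternatingGroup α ≤ H) {x : H} (hx : x ≠ 1) {ω : Ω} (hxω : x • ω = ω) {g : H}
    (hg : (g : Perm α).IsThreeCycle) (hdisj : Disjoint (g : Perm α).support (x : Perm α).support)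
    (hroom : (x : Perm α).support.card + 5 ≤ Fintype.card α) : g • ω = ω := by
  obtain ⟨ι, hι, hιg⟩ := hg.exists_viaEmbedding _ hdisj hroom
  have hmem : ∀ f : Perm (Fin 5), sign f = 1 → f.viaEmbedding ι ∈ H := fun f hf =>
    hH (mem_alternatingGroup.mpr ((sign_viaEmbedding f ι).trans hf))
  have hfive : ∀ (f : Perm (Fin 5)) (hf : sign f = 1), f ^ 5 = 1 →
      (⟨f.viaEmbedding ι, hmem f hf⟩ : H) • ω = ω := fun f hf hf5 =>
    h4.smul_eq_self_of_commute hx hxω Nat.prime_five (by norm_num)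
      (Subtype.ext (by simp [← viaEmbeddingHom_apply, ← map_pow, hf5]))
      (Subtype.ext (commute_viaEmbedding f ι fun i => notMem_support.mp (hι i)).eq)
  let f₁ : Perm (Fin 5) := [0, 3, 2, 4, 1].formPerm
  let f₂ : Perm (Fin 5) := [0, 4, 2, 1, 3].formPerm
  have hf₁ : sign f₁ = 1 := by simp [f₁, List.formPerm_cons_cons]
  have hf₂ : sign f₂ = 1 := by simp [f₂, List.formPerm_cons_cons]
  have hsplit : g = ⟨_, hmem f₁ hf₁⟩ * ⟨_, hmem f₂ hf₂⟩ := by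
    apply Subtype.ext
    rw [← hιg, (by decide : swap 0 1 * swap 1 2 = f₁ * f₂), ← viaEmbeddingHom_apply, map_mul]
    rfl
  rw [hsplit, mul_smul, hfive f₂ hf₂ (List.formPerm_pow_length_eq_one_of_nodup _ (by decide)),
    hfive f₁ hf₁ (List.formPerm_pow_length_eq_one_of_nodup _ (by decide))]

/-- From `x` pass to a three-cycle `t₁` disjoint from it, then to a three-cycle disjoint from
both `t₁` and `g`, and finally to `g`. -/
theorem isThreeCycle_smul_eq_self (h4 : FourPointStabilizersTrivial H Ω)
    (hH : alternatingGroup α ≤ H) (h9 : 9 ≤ Fintype.card α) {x : H} (hx : x ≠ 1) {ω : Ω}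
    (hxω : x • ω = ω) (hroom : (x : Perm α).support.card + 5 ≤ Fintype.card α) {g : H}
    (hg : (g : Perm α).IsThreeCycle) : g • ω = ω := by
  obtain ⟨t₁, ht₁, hd₁⟩ := exists_isThreeCycle_support_disjoint (x : Perm α).support (by omega)
  let y₁ : H := ⟨t₁, hH (mem_alternatingGroup.mpr ht₁.sign)⟩
  have hy₁ : y₁ • ω = ω := h4.smul_eq_self_of_disjoint hH hx hxω ht₁ hd₁ hroom
  obtain ⟨t₂, ht₂, hd₂⟩ :=
    exists_isThreeCycle_support_disjoint (t₁.support ∪ (g : Perm α).support) (by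
      have := Finset.card_union_le t₁.support (g : Perm α).support
      rw [ht₁.card_support, hg.card_support] at this
      omega)
  rw [Finset.disjoint_union_right] at hd₂
  let y₂ : H := ⟨t₂, hH (mem_alternatingGroup.mpr ht₂.sign)⟩
  have hy₂ : y₂ • ω = ω := h4.smul_eq_self_of_disjoint hH (ne_of_apply_ne Subtype.val ht₁.ne_one)
    hy₁ ht₂ hd₂.1 (by rw [ht₁.card_support]; omega)
  exact h4.smul_eq_self_of_disjoint hH (ne_of_apply_ne Subtype.val ht₂.ne_one) hy₂ hg hd₂.2.symm
    (by rw [ht₂.card_support]; omega)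

end FourPointStabilizersTrivial

variable (H Ω) in
def SmallSupportActsFreely : Prop :=
  ∀ y : H, y ≠ 1 → (y : Perm α).support.card + 5 ≤ Fintype.card α → ∀ ω : Ω, y • ω ≠ ω

theorem Hyp3fix.smallSupportActsFreely (hH : alternatingGroup α ≤ H) (h9 : 9 ≤ Fintype.card α)
    (hyp : Hyp3fix H Ω) : SmallSupportActsFreely H Ω := by
  obtain ⟨htrans, hfaith, h4, -⟩ := hyp
  intro x hx hroom ω hxω
  obtain ⟨t, ht, -⟩ := exists_isThreeCycle_support_disjoint (∅ : Finset α) (by simp; omega)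
  let t' : H := ⟨t, hH (mem_alternatingGroup.mpr ht.sign)⟩
  refine ht.ne_one (congrArg Subtype.val (hfaith t' fun ω' => ?_))
  obtain ⟨τ, rfl⟩ := htrans.exists_smul_eq ω ω'
  have hconj : (τ⁻¹ * t' * τ) • ω = ω := by
    refine FourPointStabilizersTrivial.isThreeCycle_smul_eq_self h4 hH h9 hx hxω hroom ?_
    simpa [IsThreeCycle] using (cycleType_conj (σ := t) (τ := (τ : Perm α)⁻¹)).trans ht
  rwa [mul_smul, mul_smul, inv_smul_eq_iff] at hconj

namespace FourPointStabilizersTrivial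

variable {a b c : Ω}

theorem rotates_of_commute (h4 : FourPointStabilizersTrivial H Ω)
    (hfree : SmallSupportActsFreely H Ω) {x : H} (hx : x ≠ 1) (habc : FixesThreePoints x a b c)
    {y : H} (hy : y ≠ 1) (hys : (y : Perm α).support.card + 5 ≤ Fintype.card α)
    (hyx : Commute y x) :
    (y • a = b ∧ y • b = c ∧ y • c = a) ∨ (y • a = c ∧ y • b = a ∧ y • c = b) := by
  rcases h4.smul_cases_of_mul_eq_mul_pow hx habc (k := 1) (by rw [pow_one, hyx.eq]) with
    ⟨hfix, -⟩ | hrot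
  · exact (hfix.elim (hfree y hy hys a) (·.elim (hfree y hy hys b) (hfree y hy hys c))).elim
  · exact hrot

theorem pow_three_eq_one_of_commute (h4 : FourPointStabilizersTrivial H Ω)
    (hfree : SmallSupportActsFreely H Ω) {x : H} (hx : x ≠ 1) (habc : FixesThreePoints x a b c)
    {y : H} (hy : y ≠ 1) (hys : (y : Perm α).support.card + 5 ≤ Fintype.card α)
    (hyx : Commute y x) : y ^ 3 = 1 := by
  by_contra hy3
  refine hfree _ hy3 ?_ a (fixesThreePoints_pow_three habc.1 habc.2.1 habc.2.2.1
    (h4.rotates_of_commute hfree hx habc hy hys hyx)).2.2.2.1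
  have := Finset.card_le_card (support_pow_le (y : Perm α) 3)
  simp only [Subgroup.coe_pow]
  omega

theorem false_of_disjoint_of_commute (h4 : FourPointStabilizersTrivial H Ω)
    (hfree : SmallSupportActsFreely H Ω) {x : H} (hx : x ≠ 1) (habc : FixesThreePoints x a b c)
    {y₁ y₂ : H} (h₁ : y₁ ≠ 1) (h₂ : y₂ ≠ 1) (hdisj : (y₁ : Perm α).Disjoint y₂)
    (hsmall : (y₁ : Perm α).support.card + (y₂ : Perm α).support.card + 5 ≤ Fintype.card α)
    (hc₁ : Commute y₁ x) (hc₂ : Commute y₂ x) : False := by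
  have hmoves : ∀ k, (y₁ * y₂ ^ k) • a ≠ a := fun k => by
    have hdisjk : (y₁ : Perm α).Disjoint ((y₂ : Perm α) ^ k) :=
      hdisj.mono le_rfl (support_pow_le _ k)
    refine hfree _ (fun h => h₁ ?_) ?_ a
    · have : (y₁ : Perm α) * (y₂ : Perm α) ^ k = 1 := by simpa using congrArg Subtype.val h
      exact OneMemClass.coe_eq_one.mp (hdisjk.mul_eq_one_iff.mp this).1
    · have := Finset.card_le_card (support_pow_le (y₂ : Perm α) k)
      simp only [Subgroup.coe_mul, Subgroup.coe_pow, hdisjk.card_support_mul]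
      omega
  rcases h4.rotates_of_commute hfree hx habc h₁ (by omega) hc₁ with
    ⟨-, hb₁, hc₁'⟩ | ⟨-, hb₁, hc₁'⟩ <;>
  rcases h4.rotates_of_commute hfree hx habc h₂ (by omega) hc₂ with
    ⟨ha₂, hb₂, hc₂'⟩ | ⟨ha₂, hb₂, hc₂'⟩
  · exact hmoves 2 (by rw [sq, mul_smul, mul_smul, ha₂, hb₂, hc₁'])
  · exact hmoves 1 (by rw [pow_one, mul_smul, ha₂, hc₁'])
  · exact hmoves 1 (by rw [pow_one, mul_smul, ha₂, hb₁])
  · exact hmoves 2 (by rw [sq, mul_smul, mul_smul, ha₂, hc₂', hb₁])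

/-- Otherwise a double transposition of four points outside the support of `x` would commute
with `x` without having order three. -/
theorem card_le_card_support_add_three (h4 : FourPointStabilizersTrivial H Ω)
    (hH : alternatingGroup α ≤ H) (hfree : SmallSupportActsFreely H Ω)
    (h9 : 9 ≤ Fintype.card α) {x : H} (hx : x ≠ 1) (habc : FixesThreePoints x a b c) :
    Fintype.card α ≤ (x : Perm α).support.card + 3 := by
  by_contra! hlt
  obtain ⟨ι, hι⟩ := (x : Perm α).support.exists_embedding_forall_notMem (k := 4) (by omega)
  let k₀ : Perm (Fin 4) := swap 0 1 * swap 2 3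
  let K : H := ⟨k₀.viaEmbedding ι,
    hH (mem_alternatingGroup.mpr ((sign_viaEmbedding k₀ ι).trans (by decide)))⟩
  have hone : ∀ {σ : Perm (Fin 4)}, σ.viaEmbedding ι = 1 → σ = 1 :=
    (map_eq_one_iff _ (viaEmbeddingHom_injective ι)).mp
  have hK : K ≠ 1 := fun h => (by decide : k₀ ≠ 1) (hone (congrArg Subtype.val h))
  have hK3 : K ^ 3 = 1 := h4.pow_three_eq_one_of_commute hfree hx habc hK
    (show (k₀.viaEmbedding ι).support.card + 5 ≤ _ by
      have := card_support_viaEmbedding_le k₀ ι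
      simp only [Fintype.card_fin] at this
      omega)
    (Subtype.ext (commute_viaEmbedding k₀ ι fun i => notMem_support.mp (hι i)).eq)
  refine (by decide : k₀ ^ 3 ≠ 1) (hone ?_)
  rw [← viaEmbeddingHom_apply, map_pow]
  exact congrArg Subtype.val hK3

theorem isCycle_of_prime_orderOf (h4 : FourPointStabilizersTrivial H Ω)
    (hH : alternatingGroup α ≤ H) (hfree : SmallSupportActsFreely H Ω)
    (h11 : 11 ≤ Fintype.card α) {v : H} (hv : (orderOf v).Prime)
    (habc : FixesThreePoints v a b c) : (v : Perm α).IsCycle := by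
  by_contra hnc
  rw [← Subgroup.orderOf_coe] at hv
  obtain ⟨f₁, f₂, hc₁, hc₂, hdisj, hf₁, hf₂, hq₁, hq₂⟩ :=
    exists_disjoint_cycles_of_prime_orderOf hv hnc
  set q := orderOf (v : Perm α)
  have hv1 : v ≠ 1 := fun h => hv.ne_one (by simp [q, h])
  have h2q : q + q ≤ Fintype.card α := by
    have := Finset.card_le_univ (f₁ * f₂).support
    rwa [hdisj.card_support_mul, hq₁, hq₂] at this
  have hdvd3 : ∀ f : Perm α, f ≠ 1 → sign f = 1 → f.support.card + 5 ≤ Fintype.card α →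
      Commute f v → orderOf f ∣ 3 := fun f hf hs hsm hfv =>
    orderOf_dvd_of_pow_eq_one <| congrArg Subtype.val <|
      h4.pow_three_eq_one_of_commute hfree hv1 habc (y := ⟨f, hH (mem_alternatingGroup.mpr hs)⟩)
        (ne_of_apply_ne Subtype.val hf) hsm (Subtype.ext hfv.eq)
  rcases (by have := hv.two_le; omega : q = 2 ∨ q = 3 ∨ 4 ≤ q) with hq | hq | hq
  · have := hdvd3 (f₁ * f₂) (fun h => hc₁.ne_one (hdisj.mul_eq_one_iff.mp h).1)
      (by rw [map_mul, hc₁.sign, hc₂.sign, hq₁, hq₂, hq]; decide)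
      (by rw [hdisj.card_support_mul]; omega) (hf₁.mul_left hf₂)
    rw [hdisj.orderOf, hc₁.orderOf, hc₂.orderOf, hq₁, hq₂, hq] at this
    norm_num at this
  · have hsign : ∀ {f : Perm α}, f.IsCycle → f.support.card = q → sign f = 1 := fun hf hfq => by
      rw [hf.sign, hfq, hq]; decide
    exact h4.false_of_disjoint_of_commute hfree hv1 habc
      (y₁ := ⟨f₁, hH (mem_alternatingGroup.mpr (hsign hc₁ hq₁))⟩)
      (y₂ := ⟨f₂, hH (mem_alternatingGroup.mpr (hsign hc₂ hq₂))⟩)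
      (ne_of_apply_ne Subtype.val hc₁.ne_one) (ne_of_apply_ne Subtype.val hc₂.ne_one) hdisj
      (by simp only; omega)
      (Subtype.ext hf₁.eq) (Subtype.ext hf₂.eq)
  · have hodd : Odd q := hv.odd_of_ne_two (by omega)
    have := hdvd3 f₁ hc₁.ne_one (by rw [hc₁.sign, hq₁, hodd.neg_one_pow, neg_neg]) (by omega) hf₁
    rw [hc₁.orderOf, hq₁] at this
    have := Nat.le_of_dvd (by norm_num) this
    omega

theorem card_le_orderOf_add_three (h4 : FourPointStabilizersTrivial H Ω)
    (hH : alternatingGroup α ≤ H) (hfree : SmallSupportActsFreely H Ω)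
    (h11 : 11 ≤ Fintype.card α) {y : H} (hy : y ≠ 1) (habc : FixesThreePoints y a b c) :
    Fintype.card α ≤ orderOf y + 3 := by
  obtain ⟨k, hp, hdvd⟩ := exists_pow_prime_orderOf hy
  have hcyc := h4.isCycle_of_prime_orderOf hH hfree h11 hp (habc.pow k)
  have := h4.card_le_card_support_add_three hH hfree (by omega)
    (fun h => hp.ne_one (by rw [h, orderOf_one])) (habc.pow k)
  rw [← hcyc.orderOf, Subgroup.orderOf_coe] at this
  have := Nat.le_of_dvd (orderOf_pos y) hdvd
  omega

theorem false_of_smallSupportActsFreely (h4 : FourPointStabilizersTrivial H Ω)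
    (hH : alternatingGroup α ≤ H) (hfree : SmallSupportActsFreely H Ω)
    (h11 : 11 ≤ Fintype.card α) {σ : H} (hσ : σ ≠ 1) (habc : FixesThreePoints σ a b c) :
    False := by
  obtain ⟨k, hp, -⟩ := exists_pow_prime_orderOf hσ
  set h := σ ^ k
  have hh1 : h ≠ 1 := fun h1 => hp.ne_one (by rw [h1, orderOf_one])
  have hcyc := h4.isCycle_of_prime_orderOf hH hfree h11 hp (habc.pow k)
  have hnp := h4.card_le_orderOf_add_three hH hfree h11 hh1 (habc.pow k)
  have hpn : orderOf (h : Perm α) ≤ Fintype.card α := hcyc.orderOf ▸ Finset.card_le_univ _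
  rw [← Subgroup.orderOf_coe] at hp hnp
  set p := orderOf (h : Perm α)
  have hp8 : p ≠ 8 := fun h8 => by rw [h8] at hp; norm_num at hp
  obtain ⟨u, hu, hord, m, hrel⟩ := hcyc.exists_sign_eq_one_normalizing hp (by omega)
  let u' : H := ⟨u, hH (mem_alternatingGroup.mpr hu)⟩
  obtain ⟨o, ho, hfix⟩ : ∃ o, (o = 2 ∨ o = 3) ∧ FixesThreePoints (u' ^ o) a b c := by
    rcases h4.smul_cases_of_mul_eq_mul_pow hh1 (habc.pow k) (y := u') (Subtype.ext hrel) with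
      ⟨-, h2⟩ | hrot
    · exact ⟨2, .inl rfl, h2⟩
    · exact ⟨3, .inr rfl, fixesThreePoints_pow_three habc.1 habc.2.1 habc.2.2.1 hrot⟩
  have hu' : orderOf u' = (p - 1) / 2 := by rw [Subgroup.orderOf_mk, hord]
  have hne : u' ^ o ≠ 1 := pow_ne_one_of_lt_orderOf (by omega) (by omega)
  have := h4.card_le_orderOf_add_three hH hfree h11 hne hfix
  have := Nat.le_of_dvd (orderOf_pos u') (orderOf_pow_dvd o)
  omega

end FourPointStabilizersTrivial

theorem not_hyp3fix_of_alternatingGroup_le (hH : alternatingGroup α ≤ H)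
    (h11 : 11 ≤ Fintype.card α) : ¬ Hyp3fix H Ω := fun hyp => by
  have hfree := hyp.smallSupportActsFreely hH (by omega)
  obtain ⟨-, -, h4, σ, hσ, a, b, c, habc⟩ := hyp
  exact FourPointStabilizersTrivial.false_of_smallSupportActsFreely h4 hH hfree h11 hσ habc

end Subgroup

theorem Hyp3fix.compHom {G K Ω : Type*} [Group G] [Group K] [MulAction G Ω] (e : K ≃* G)
    (h : Hyp3fix G Ω) :
    letI := MulAction.compHom Ω e.toMonoidHom
    Hyp3fix K Ω := by
  let := MulAction.compHom Ω e.toMonoidHom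
  obtain ⟨htrans, hfaith, h4, g, hg, a, b, c, habc⟩ := h
  refine ⟨⟨fun ω ω' => ?_⟩, fun k hk => ?_, fun k a b c d hab hac had hbc hbd hcd => ?_,
    e.symm g, ?_, a, b, c, ?_⟩
  · obtain ⟨g', hg'⟩ := htrans.exists_smul_eq ω ω'
    exact ⟨e.symm g', by simpa [MulAction.compHom_smul_def] using hg'⟩
  · simpa using hfaith (e k) hk
  · exact fun ha hb hc hd => (map_eq_one_iff e e.injective).mp
      (h4 (e k) a b c d hab hac had hbc hbd hcd ha hb hc hd)
  · simpa using hg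
  · simpa [MulAction.compHom_smul_def] using habc

theorem not_hyp3fix_of_mulEquiv {α : Type*} [DecidableEq α] [Fintype α]
    {H : Subgroup (Perm α)} (hH : alternatingGroup α ≤ H) (h11 : 11 ≤ Fintype.card α)
    {G Ω : Type*} [Group G] [MulAction G Ω] (e : G ≃* H) : ¬ Hyp3fix G Ω := fun hyp => by
  let := MulAction.compHom Ω e.symm.toMonoidHom
  exact not_hyp3fix_of_alternatingGroup_le hH h11 (hyp.compHom e.symm)

theorem no_hyp3fix_of_alt_or_sym_of_eleven_le_general (n : ℕ) (hn : 11 ≤ n)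
    (G : Type*) [Group G]
    (hiso : Nonempty (G ≃* alternatingGroup (Fin n)) ∨ Nonempty (G ≃* Equiv.Perm (Fin n)))
    (Ω : Type*) [MulAction G Ω] :
    ¬ Hyp3fix G Ω := by
  have hcard : 11 ≤ Fintype.card (Fin n) := by rwa [Fintype.card_fin]
  rcases hiso with ⟨⟨e⟩⟩ | ⟨⟨e⟩⟩
  · exact not_hyp3fix_of_mulEquiv le_rfl hcard e
  · exact not_hyp3fix_of_mulEquiv le_top hcard (e.trans Subgroup.topEquiv.symm)

/-- For `n ≥ 11`, if the finite group `G` is isomorphic to the alternating group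
`Alt(n)` or to the symmetric group `Sym(n)`, then there is no finite set `Ω` with a
`G`-action such that `(G, Ω)` satisfies Hypothesis (3fix). -/
theorem no_hyp3fix_of_alt_or_sym_of_eleven_le (n : ℕ) (hn : 11 ≤ n)
    (G : Type*) [Group G] [Finite G]
    (hiso : Nonempty (G ≃* alternatingGroup (Fin n)) ∨ Nonempty (G ≃* Equiv.Perm (Fin n)))
    (Ω : Type*) [Finite Ω] [MulAction G Ω] :
    ¬ Hyp3fix G Ω :=
  no_hyp3fix_of_alt_or_sym_of_eleven_le_general n hn G hiso Ω
end

section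
/- Let G be a finite group whose order is coprime to 6, acting faithfully, transitively and nonregularly (i.e. some point stabilizer is nontrivial) on a finite set Ω, such that every element of G fixing at least four distinct points of Ω is the identity. Then the action of G on Ω is a Frobenius action: every nontrivial element of G fixes at most one point of Ω. -/
/-!
If a nontrivial `y` fixes `ω, x • ω, x ^ 2 • ω, x ^ 3 • ω`, these are not four distinct points,
so the `⟨x⟩`-orbit of `ω` has length at most `3`; that length divides `|G|`, which is prime to
`6`, so `x` fixes `ω`. Consequently whatever commutes with a nontrivial element fixing `ω`, or
normalizes a subgroup that fixes `ω` and is nontrivial, fixes `ω` as well.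

If `g ≠ 1` fixed `a ≠ b`, take a power `y ≠ 1` of `g` of prime order `p` and a Sylow
`p`-subgroup `P ∋ y`. A nontrivial central element of `P` commutes with `y`, so it fixes `a` and
`b`, and then so does all of `P`. A Frattini argument in the stabilizer of `b` produces `m` in the
normalizer of `P` with `m • a = b`, whereas `m` must fix `a`.
-/

open MulAction Subgroup

def AtMostThreeFixedPoints (G Ω : Type*) [Group G] [MulAction G Ω] : Prop :=
  ∀ g : G, ∀ a b c d : Ω, a ≠ b → a ≠ c → a ≠ d → b ≠ c → b ≠ d → c ≠ d →
    g • a = a → g • b = b → g • c = c → g • d = d → g = 1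

section

variable {G Ω : Type*} [Group G] [MulAction G Ω]

theorem pow_smul_ne_pow_smul_of_lt_period {x : G} {ω : Ω} {i j : ℕ} (hij : i < j)
    (hj : j < period x ω) : x ^ i • ω ≠ x ^ j • ω := by
  intro h
  obtain ⟨k, rfl⟩ := Nat.exists_eq_add_of_lt hij
  rw [add_assoc, pow_add, mul_smul] at h
  exact pow_smul_ne_of_lt_period (m := x) (a := ω) k.succ_pos (by omega)
    (smul_left_cancel _ h).symm

theorem period_le_three_of_forall_pow_smul_fixed (h3 : AtMostThreeFixedPoints G Ω) {x y : G}
    {ω : Ω} (hy : y ≠ 1) (hfix : ∀ i : ℕ, y • x ^ i • ω = x ^ i • ω) : period x ω ≤ 3 := by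
  by_contra! hlt
  exact hy <| h3 y _ _ _ _
    (pow_smul_ne_pow_smul_of_lt_period (by norm_num) (by omega))
    (pow_smul_ne_pow_smul_of_lt_period (by norm_num) (by omega))
    (pow_smul_ne_pow_smul_of_lt_period (by norm_num) (by omega))
    (pow_smul_ne_pow_smul_of_lt_period (by norm_num) (by omega))
    (pow_smul_ne_pow_smul_of_lt_period (by norm_num) (by omega))
    (pow_smul_ne_pow_smul_of_lt_period (i := 2) (j := 3) (by norm_num) hlt)
    (hfix 0) (hfix 1) (hfix 2) (hfix 3)

variable [Finite G] (hcop : (Nat.card G).Coprime 6) (h3 : AtMostThreeFixedPoints G Ω)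
include hcop h3

theorem smul_eq_self_of_forall_pow_smul_fixed {x y : G} {ω : Ω} (hy : y ≠ 1)
    (hfix : ∀ i : ℕ, y • x ^ i • ω = x ^ i • ω) : x • ω = ω := by
  have hpos : 0 < period x ω := period_pos_of_orderOf_pos (orderOf_pos x) ω
  have hle : period x ω ≤ 3 := period_le_three_of_forall_pow_smul_fixed h3 hy hfix
  have hcop' : (period x ω).Coprime 6 :=
    hcop.coprime_dvd_left ((period_dvd_orderOf x ω).trans (orderOf_dvd_natCard x))
  rw [← period_eq_one_iff]
  interval_cases period x ω <;> first | rfl | norm_num at hcop'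

theorem smul_eq_self_of_commute {x y : G} {ω : Ω} (hy : y ≠ 1) (hyω : y • ω = ω)
    (hxy : Commute x y) : x • ω = ω :=
  smul_eq_self_of_forall_pow_smul_fixed hcop h3 hy fun i => by
    rw [smul_smul, ← (hxy.pow_left i).eq, mul_smul, hyω]

theorem IsPGroup.le_stabilizer {p : ℕ} [Fact p.Prime] {Q : Subgroup G} (hQ : IsPGroup p Q)
    {y : G} (hyQ : y ∈ Q) (hy : y ≠ 1) {a : Ω} (hya : y • a = a) : Q ≤ stabilizer G a := by
  have : Nontrivial Q := nontrivial_of_ne ⟨y, hyQ⟩ 1 (by simpa using hy)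
  have := hQ.center_nontrivial
  obtain ⟨⟨⟨z, hzQ⟩, hzc⟩, hz⟩ := exists_ne (1 : center Q)
  have hz1 : z ≠ 1 := fun h => hz (by ext; exact h)
  have hcomm : ∀ u ∈ Q, Commute u z := fun u hu =>
    congrArg Subtype.val (mem_center_iff.mp hzc ⟨u, hu⟩)
  have hza : z • a = a := smul_eq_self_of_commute hcop h3 hy hya (hcomm y hyQ).symm
  exact fun u hu => smul_eq_self_of_commute hcop h3 hz1 hza (hcomm u hu)

theorem smul_eq_self_of_mem_normalizer {Q : Subgroup G} {a : Ω} (hQa : Q ≤ stabilizer G a)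
    {z : G} (hzQ : z ∈ Q) (hz : z ≠ 1) {m : G} (hm : m ∈ normalizer (Q : Set G)) :
    m • a = a :=
  smul_eq_self_of_forall_pow_smul_fixed hcop h3 hz fun i => by
    have hconj : (m ^ i)⁻¹ * z * m ^ i ∈ Q := by
      simpa using (mem_normalizer_iff.mp (inv_mem (pow_mem hm i)) z).mp hzQ
    rw [show z = m ^ i * ((m ^ i)⁻¹ * z * m ^ i) * (m ^ i)⁻¹ by group, mul_smul, mul_smul,
      inv_smul_smul, hQa hconj]

end

theorem Sylow.exists_mem_normalizer_smul_eq {G Ω : Type*} [Group G] [Finite G]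
    [MulAction G Ω] [IsPretransitive G Ω] {p : ℕ} [Fact p.Prime] (P : Sylow p G) {a b : Ω}
    (ha : (P : Subgroup G) ≤ stabilizer G a) (hb : (P : Subgroup G) ≤ stabilizer G b) :
    ∃ m ∈ normalizer (P : Set G), m • a = b := by
  obtain ⟨t, rfl⟩ := exists_smul_eq G a b
  have htP : ((t • P : Sylow p G) : Subgroup G) ≤ stabilizer G (t • a) := by
    rw [stabilizer_smul_eq_stabilizer_map_conj, Sylow.coe_subgroup_smul]
    exact map_mono ha
  obtain ⟨k, hk⟩ := exists_smul_eq (stabilizer G (t • a)) ((t • P).subtype htP) (P.subtype hb)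
  simp_rw [Sylow.smul_subtype, Subgroup.smul_def, smul_smul] at hk
  exact ⟨k * t, Sylow.smul_eq_iff_mem_normalizer.mp (Sylow.subtype_injective hk),
    by rw [mul_smul, k.2]⟩

theorem exists_prime_orderOf_pow {G : Type*} [Group G] [Finite G] {g : G} (hg : g ≠ 1) :
    ∃ p n : ℕ, p.Prime ∧ orderOf (g ^ n) = p :=
  ⟨_, _, Nat.minFac_prime (mt orderOf_eq_one_iff.mp hg),
    orderOf_pow_orderOf_div (orderOf_pos g).ne' (Nat.minFac_dvd _)⟩

theorem frobenius_of_coprime_six_general (G : Type*) [Group G] [Finite G]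
    (Ω : Type*) [MulAction G Ω]
    (hcop : Nat.Coprime (Nat.card G) 6)
    (htrans : MulAction.IsPretransitive G Ω)
    (hnonreg : ∃ ω : Ω, MulAction.stabilizer G ω ≠ ⊥)
    (h4 : ∀ g : G, ∀ a b c d : Ω, a ≠ b → a ≠ c → a ≠ d → b ≠ c → b ≠ d → c ≠ d →
        g • a = a → g • b = b → g • c = c → g • d = d → g = 1) :
    (∃ ω : Ω, MulAction.stabilizer G ω ≠ ⊥) ∧
    ∀ g : G, g ≠ 1 → ∀ a b : Ω, g • a = a → g • b = b → a = b := by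
  refine ⟨hnonreg, fun g hg a b hga hgb => ?_⟩
  obtain ⟨p, n, hp, hyp⟩ := exists_prime_orderOf_pow hg
  have : Fact p.Prime := ⟨hp⟩
  have hy : g ^ n ≠ 1 := (orderOf_eq_prime_iff.mp hyp).2
  have hpgroup : IsPGroup p (zpowers (g ^ n)) :=
    IsPGroup.of_card (n := 1) (by rw [Nat.card_zpowers, hyp, pow_one])
  obtain ⟨P, hP⟩ := hpgroup.exists_le_sylow
  have hyP : g ^ n ∈ P := hP (mem_zpowers _)
  have hPa := P.isPGroup'.le_stabilizer hcop h4 hyP hy (pow_mem (mem_stabilizer_iff.mpr hga) n)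
  have hPb := P.isPGroup'.le_stabilizer hcop h4 hyP hy (pow_mem (mem_stabilizer_iff.mpr hgb) n)
  obtain ⟨m, hm, rfl⟩ := P.exists_mem_normalizer_smul_eq hPa hPb
  exact (smul_eq_self_of_mem_normalizer hcop h4 hPa hyP hy hm).symm

/-- Let `G` be a finite group of order coprime to `6` acting faithfully, transitively and
nonregularly on a finite set `Ω`, such that every element fixing at least four distinct
points is the identity. Then the action is a Frobenius action: some point stabilizer is
nontrivial and every nontrivial element of `G` fixes at most one point of `Ω`. -/
theorem frobenius_of_coprime_six (G : Type*) [Group G] [Finite G]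
    (Ω : Type*) [Finite Ω] [MulAction G Ω]
    (hcop : Nat.Coprime (Nat.card G) 6)
    (htrans : MulAction.IsPretransitive G Ω)
    (hfaithful : ∀ g : G, (∀ ω : Ω, g • ω = ω) → g = 1)
    (hnonreg : ∃ ω : Ω, MulAction.stabilizer G ω ≠ ⊥)
    (h4 : ∀ g : G, ∀ a b c d : Ω, a ≠ b → a ≠ c → a ≠ d → b ≠ c → b ≠ d → c ≠ d →
        g • a = a → g • b = b → g • c = c → g • d = d → g = 1) :
    (∃ ω : Ω, MulAction.stabilizer G ω ≠ ⊥) ∧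
    ∀ g : G, g ≠ 1 → ∀ a b : Ω, g • a = a → g • b = b → a = b :=
  frobenius_of_coprime_six_general G Ω hcop htrans hnonreg h4
end

section
/- Suppose the finite group G acts on the finite set Ω, (G, Ω) satisfies Hypothesis (3fix), and |Ω| ≥ 7. Let ω ∈ Ω, suppose |G_ω| is odd, and suppose there exist three distinct points of Ω, one of which is ω, whose pointwise stabilizer H in G is nontrivial and is a Frobenius complement in G_ω (i.e. H is a proper subgroup of G_ω with H ∩ xHx⁻¹ = 1 for all x ∈ G_ω \ H). Let Λ be the coset space G/H with the natural G-action by multiplication. Then (G, Λ) satisfies Hypothesis (3fix), and moreover every nontrivial element of G that fixes at least one point of Λ fixes exactly three points of Λ. -/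
open MulAction Pointwise

section GroupAction

variable {G α : Type*} [Group G] [MulAction G α]

theorem eq_of_smul_swap_of_odd_orderOf {s : G} {b c : α} (hs : Odd (orderOf s))
    (hbc : s • b = c) (hcb : s • c = b) : b = c := by
  obtain ⟨n, hn⟩ := hs
  have hsq : s ^ 2 ∈ stabilizer G b := by
    rw [mem_stabilizer_iff, pow_two, mul_smul, hbc, hcb]
  calc b = s ^ orderOf s • b := by rw [pow_orderOf_eq_one, one_smul]
    _ = s • (s ^ 2) ^ n • b := by rw [hn, pow_succ', pow_mul, mul_smul]
    _ = c := by rw [mem_stabilizer_iff.mp (pow_mem hsq n), hbc]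

theorem mk_mem_fixedBy_quotient_iff {H : Subgroup G} {g y : G} :
    (y : G ⧸ H) ∈ fixedBy (G ⧸ H) g ↔ y⁻¹ * g * y ∈ H := by
  rw [mem_fixedBy, Quotient.smul_mk, QuotientGroup.eq, ← inv_mem_iff]
  simp [mul_assoc]

theorem stabilizer_subgroup_quotient (H S : Subgroup G) :
    stabilizer S ((1 : G) : G ⧸ H) = H.subgroupOf S := by
  ext x
  change (x : G) • ((1 : G) : G ⧸ H) = _ ↔ _
  simp [Subgroup.mem_subgroupOf, QuotientGroup.eq]

theorem ncard_setOf_smul_mem [IsPretransitive G α] (ω : α) (T : Set α) :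
    {x : G | x • ω ∈ T}.ncard = Nat.card (stabilizer G ω) * T.ncard := by
  have hrange : Set.range (ofQuotientStabilizer G ω) = Set.univ :=
    Set.range_eq_univ.mpr fun p =>
      let ⟨g, hg⟩ := exists_smul_eq G ω p; ⟨g, hg⟩
  rw [← Nat.card_coe_set_eq,
    show {x : G | x • ω ∈ T} = QuotientGroup.mk ⁻¹' (ofQuotientStabilizer G ω ⁻¹' T) from rfl,
    QuotientGroup.card_preimage_mk, Nat.card_coe_set_eq,
    Set.ncard_preimage_of_injective_subset_range (injective_ofQuotientStabilizer G ω)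
      (hrange ▸ Set.subset_univ T)]

theorem conj_mem_fixingSubgroup {T : Set α} {s h : G} (hs : s ∈ stabilizer G T)
    (hh : h ∈ fixingSubgroup G T) : s * h * s⁻¹ ∈ fixingSubgroup G T := by
  rw [← mem_stabilizer_iff.mp hs, SubMulAction.fixingSubgroup_smul_eq_fixingSubgroup_map_conj]
  exact Subgroup.mem_map_of_mem _ hh

theorem faithful_quotient_of_le_stabilizer [IsPretransitive G α]
    (hfaith : ∀ g : G, (∀ x : α, g • x = x) → g = 1) {H : Subgroup G} {ω : α}
    (hH : H ≤ stabilizer G ω) (g : G) (hg : ∀ x : G ⧸ H, g • x = x) : g = 1 := by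
  refine hfaith g fun p => ?_
  obtain ⟨y, rfl⟩ := exists_smul_eq G ω p
  have := hH (mk_mem_fixedBy_quotient_iff.mp (hg y))
  rwa [mem_stabilizer_iff, mul_smul, mul_smul, inv_smul_eq_iff] at this

theorem hyp3fix_of_card_fixedBy_eq_three [IsPretransitive G α]
    (hfaith : ∀ g : G, (∀ x : α, g • x = x) → g = 1)
    (hthree : ∀ g : G, g ≠ 1 → (∃ x : α, g • x = x) → Nat.card {x : α | g • x = x} = 3)
    {g₀ : G} (hg₀ : g₀ ≠ 1) {x₀ : α} (hx₀ : g₀ • x₀ = x₀) : Hyp3fix G α := by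
  refine ⟨inferInstance, hfaith, ?_, ?_⟩
  · intro g a b c d hab hac had hbc hbd hcd ha hb hc hd
    by_contra hg1
    have h3 := hthree g hg1 ⟨a, ha⟩
    rw [Nat.card_coe_set_eq] at h3
    have h4 : ({a, b, c, d} : Set α).ncard = 4 := by
      rw [Set.ncard_insert_of_notMem (by simp [hab, hac, had]),
        Set.ncard_insert_of_notMem (by simp [hbc, hbd]), Set.ncard_pair hcd]
    have hsub : ({a, b, c, d} : Set α) ⊆ {x | g • x = x} := by
      simp [Set.insert_subset_iff, ha, hb, hc, hd]
    have := Set.ncard_le_ncard hsub (Set.finite_of_ncard_ne_zero (by omega))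
    omega
  · have h3 := hthree g₀ hg₀ ⟨x₀, hx₀⟩
    rw [Nat.card_coe_set_eq, Set.ncard_eq_three] at h3
    obtain ⟨a, b, c, hab, hac, hbc, hset⟩ := h3
    have hfix : ∀ y ∈ ({a, b, c} : Set α), g₀ • y = y := fun y hy => by
      rw [← hset] at hy; exact hy
    exact ⟨g₀, hg₀, a, b, c, hab, hac, hbc, hfix a (by simp), hfix b (by simp), hfix c (by simp)⟩

end GroupAction

def IsExactFixedSet (G : Type*) {α : Type*} [Group G] [MulAction G α] (T : Set α) : Prop :=
  ∀ h ∈ fixingSubgroup G T, h ≠ 1 → fixedBy α h = T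

section ExactFixedSet

variable {G α : Type*} [Group G] [MulAction G α] {T : Set α}

theorem fixedBy_conj_eq_smul (hT : IsExactFixedSet G T) {h : G} (hh : h ∈ fixingSubgroup G T) (h1 : h ≠ 1) (x : G) :
    fixedBy α (x * h * x⁻¹) = x • T := by
  rw [← smul_fixedBy, hT h hh h1]

theorem fixedBy_quotient_eq_orbit (hT : IsExactFixedSet G T)
    {k : G} (hk : k ∈ fixingSubgroup G T) (hk1 : k ≠ 1) :
    fixedBy (G ⧸ fixingSubgroup G T) k =
      orbit (stabilizer G T) ((1 : G) : G ⧸ fixingSubgroup G T) := by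
  have hconj_mem_iff : ∀ y : G, y⁻¹ * k * y ∈ fixingSubgroup G T ↔ y ∈ stabilizer G T := fun y => by
    refine ⟨fun hy => ?_, fun hy => by simpa using conj_mem_fixingSubgroup (inv_mem hy) hk⟩
    have hy1 : y⁻¹ * k * y ≠ 1 := by simpa [mul_assoc, mul_eq_one_iff_eq_inv] using hk1
    rw [mem_stabilizer_iff, ← fixedBy_conj_eq_smul hT hy hy1, ← hT k hk hk1]
    group
  ext q
  induction q using QuotientGroup.induction_on with | H y => ?_
  rw [mk_mem_fixedBy_quotient_iff, hconj_mem_iff, mem_orbit_iff]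
  constructor
  · refine fun hy => ⟨⟨y, hy⟩, ?_⟩
    change y • ((1 : G) : G ⧸ fixingSubgroup G T) = y
    simp
  · rintro ⟨s, hs⟩
    change (s : G) • ((1 : G) : G ⧸ fixingSubgroup G T) = y at hs
    rw [Quotient.smul_mk, smul_eq_mul, mul_one, QuotientGroup.eq] at hs
    simpa using mul_mem s.2 (fixingSubgroup_le_stabilizer G T hs)

theorem ncard_fixedBy_quotient (hT : IsExactFixedSet G T)
    {g : G} (hg : g ≠ 1) (hfix : (fixedBy (G ⧸ fixingSubgroup G T) g).Nonempty) :
    (fixedBy (G ⧸ fixingSubgroup G T) g).ncard =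
      (fixingSubgroup G T).relIndex (stabilizer G T) := by
  obtain ⟨q, hq⟩ := hfix
  obtain ⟨y, rfl⟩ := QuotientGroup.mk_surjective q
  have hk := mk_mem_fixedBy_quotient_iff.mp hq
  have hk1 : y⁻¹ * g * y ≠ 1 := by simpa [mul_assoc, mul_eq_one_iff_eq_inv] using hg
  have hg' : g = y * (y⁻¹ * g * y) * y⁻¹ := by group
  rw [hg', ← smul_fixedBy, Set.ncard_smul_set, fixedBy_quotient_eq_orbit hT hk hk1,
    ← index_stabilizer, stabilizer_subgroup_quotient, Subgroup.relIndex]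

end ExactFixedSet

section Counting

open Finset

variable {G α : Type*} [Group G] [MulAction G α] {T : Set α}

theorem card_filter_mem_ne_one [Fintype G] [DecidableEq G] (H : Subgroup G)
    [DecidablePred (· ∈ H)] : #{x | x ∈ H ∧ x ≠ 1} = Nat.card H - 1 := by
  have : ({x | x ∈ H ∧ x ≠ 1} : Finset G) = ({x | x ∈ H} : Finset G).erase 1 := by
    ext; simp [and_comm]
  rw [this, card_erase_of_mem (by simp), Nat.card_eq_fintype_card,
    Fintype.card_subtype]

theorem card_conj_fiber_le_card_stabilizer [Fintype G] [DecidableEq G]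
    (hT : IsExactFixedSet G T) (X : Finset (G × G)) (hX : ∀ q ∈ X, q.2 ∈ fixingSubgroup G T ∧ q.2 ≠ 1) (k : G) :
    #{q ∈ X | q.1⁻¹ * q.2 * q.1 = k} ≤ Nat.card (stabilizer G T) := by
  obtain hempty | ⟨q₀, hq₀⟩ := ({q ∈ X | q.1⁻¹ * q.2 * q.1 = k}).eq_empty_or_nonempty
  · simp [hempty]
  have hfix : ∀ q ∈ {q ∈ X | q.1⁻¹ * q.2 * q.1 = k}, fixedBy α k = q.1⁻¹ • T := by
    intro q hq
    obtain ⟨hqX, rfl⟩ := mem_filter.mp hq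
    simpa using fixedBy_conj_eq_smul hT (hX q hqX).1 (hX q hqX).2 q.1⁻¹
  calc #{q ∈ X | q.1⁻¹ * q.2 * q.1 = k}
      ≤ #({s | s ∈ stabilizer G T} : Finset G) := by
        refine card_le_card_of_injOn (fun q => q₀.1 * q.1⁻¹) (fun q hq => ?_) ?_
        · simp only [coe_filter, mem_univ, true_and, Set.mem_ofPred_eq, mem_stabilizer_iff]
          rw [mul_smul, ← hfix q hq, hfix q₀ hq₀, smul_inv_smul]
        · intro q hq q' hq' hqq'
          have h1 : q.1 = q'.1 := inv_injective (mul_left_cancel hqq')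
          have h2 := (mem_filter.mp hq).2.trans (mem_filter.mp hq').2.symm
          rw [h1] at h2
          exact Prod.ext h1 (mul_left_cancel (mul_right_cancel h2))
    _ = Nat.card (stabilizer G T) := by
        rw [Nat.card_eq_fintype_card, Fintype.card_subtype]

theorem ncard_mul_card_stabilizer_le [Finite G] [IsPretransitive G α]
    (hT : IsExactFixedSet G T) (ω : α) :
    T.ncard * Nat.card (stabilizer G ω) * (Nat.card (fixingSubgroup G T) - 1) ≤
      Nat.card (stabilizer G T) * (Nat.card (stabilizer G ω) - 1) := by
  classical
  have := Fintype.ofFinite G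
  let X : Finset (G × G) :=
    ({x | x • ω ∈ T} : Finset G) ×ˢ ({h | h ∈ fixingSubgroup G T ∧ h ≠ 1} : Finset G)
  let conj : G × G → G := fun q => q.1⁻¹ * q.2 * q.1
  have hD : #({x | x • ω ∈ T} : Finset G) = Nat.card (stabilizer G ω) * T.ncard := by
    rw [← ncard_setOf_smul_mem ω T, ← Set.ncard_coe_finset]
    simp
  have himage : X.image conj ⊆ ({k | k ∈ stabilizer G ω ∧ k ≠ 1} : Finset G) := by
    simp only [X, subset_iff, mem_image, mem_product, mem_filter, mem_univ, true_and]
    rintro _ ⟨⟨x, h⟩, ⟨hx, hh, h1⟩, rfl⟩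
    refine ⟨?_, by simpa [conj, mul_assoc, mul_eq_one_iff_eq_inv] using h1⟩
    rw [mem_stabilizer_iff, mul_smul, mul_smul, (mem_fixingSubgroup_iff G).mp hh _ hx,
      inv_smul_smul]
  calc T.ncard * Nat.card (stabilizer G ω) * (Nat.card (fixingSubgroup G T) - 1)
      = #X := by rw [card_product, hD, card_filter_mem_ne_one]; ring
    _ ≤ Nat.card (stabilizer G T) * #(X.image conj) :=
      card_le_mul_card_image X _ fun k _ =>
        card_conj_fiber_le_card_stabilizer hT X (fun q hq => by simp_all [X]) k
    _ ≤ Nat.card (stabilizer G T) * (Nat.card (stabilizer G ω) - 1) := by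
      rw [← card_filter_mem_ne_one]
      exact Nat.mul_le_mul_left _ (card_le_card himage)

end Counting

section Index

variable {G α : Type*} [Group G] [MulAction G α] {T : Set α} {ω : α}

theorem relIndex_fixingSubgroup_le_ncard (hTfin : T.Finite) (hω : ω ∈ T)
    (hle : stabilizer G T ⊓ stabilizer G ω ≤ fixingSubgroup G T) :
    (fixingSubgroup G T).relIndex (stabilizer G T) ≤ T.ncard := by
  have hH : fixingSubgroup G T = stabilizer G ω ⊓ stabilizer G T :=
    le_antisymm (le_inf (fun h hh => (mem_fixingSubgroup_iff G).mp hh ω hω)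
      (fixingSubgroup_le_stabilizer G T)) (by rwa [inf_comm])
  have horbit : orbit (stabilizer G T) ω ⊆ T := by
    rintro _ ⟨s, rfl⟩
    exact (mem_stabilizer_set.mp s.2 ω).mpr hω
  have hstab : (stabilizer G ω).subgroupOf (stabilizer G T) = stabilizer (stabilizer G T) ω := by
    ext; rfl
  rw [hH, Subgroup.inf_relIndex_right, Subgroup.relIndex, hstab, index_stabilizer]
  exact Set.ncard_le_ncard horbit hTfin

theorem relIndex_fixingSubgroup_eq_ncard [Finite G] [IsPretransitive G α]
    (hT : IsExactFixedSet G T) (hTfin : T.Finite) (hω : ω ∈ T)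
    (hle : stabilizer G T ⊓ stabilizer G ω ≤ fixingSubgroup G T)
    (hTH : T.ncard ≤ Nat.card (fixingSubgroup G T)) (hne : fixingSubgroup G T ≠ ⊥) :
    (fixingSubgroup G T).relIndex (stabilizer G T) = T.ncard := by
  have hS := ((fixingSubgroup G T).subgroupOf (stabilizer G T)).card_mul_index
  rw [Nat.card_congr (Subgroup.subgroupOfEquivOfLe (fixingSubgroup_le_stabilizer G T)).toEquiv,
    ← Subgroup.relIndex] at hS
  have hcount := ncard_mul_card_stabilizer_le hT ω
  rw [← hS] at hcount
  have hK : 1 ≤ Nat.card (stabilizer G ω) := Nat.card_pos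
  have hH2 : 2 ≤ Nat.card (fixingSubgroup G T) := by
    have := mt Subgroup.card_eq_one.mp hne
    have : 0 < Nat.card (fixingSubgroup G T) := Nat.card_pos
    omega
  have hT1 : 1 ≤ T.ncard := (Set.ncard_pos hTfin).mpr ⟨ω, hω⟩
  refine le_antisymm (relIndex_fixingSubgroup_le_ncard hTfin hω hle) ?_
  by_contra! hlt
  have hcount' := hcount.trans
    (Nat.mul_le_mul_right _ (Nat.mul_le_mul_left _ (Nat.le_sub_one_of_lt hlt)))
  zify [hK, hT1, (by omega : 1 ≤ Nat.card (fixingSubgroup G T))] at hcount'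
  nlinarith

end Index

section ThreePoints

variable {G α : Type*} [Group G] [MulAction G α] {a b c : α}

theorem Hyp3fix.isExactFixedSet (h : Hyp3fix G α) (hab : a ≠ b) (hac : a ≠ c) (hbc : b ≠ c) :
    IsExactFixedSet G ({a, b, c} : Set α) := by
  intro g hg hg1
  refine subset_antisymm (fun x hx => ?_) ((mem_fixingSubgroup_iff_subset_fixedBy G).mp hg)
  have hfix := (mem_fixingSubgroup_iff G).mp hg
  by_contra hxT
  simp only [Set.mem_insert_iff, Set.mem_singleton_iff, not_or] at hxT
  exact hg1 (h.2.2.1 g a b c x hab hac (Ne.symm hxT.1) hbc (Ne.symm hxT.2.1) (Ne.symm hxT.2.2)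
    (hfix a (by simp)) (hfix b (by simp)) (hfix c (by simp)) hx)

theorem stabilizer_inf_stabilizer_le_fixingSubgroup (hab : a ≠ b) (hac : a ≠ c) (hbc : b ≠ c)
    (hodd : Odd (Nat.card (stabilizer G a))) :
    stabilizer G ({a, b, c} : Set α) ⊓ stabilizer G a ≤ fixingSubgroup G {a, b, c} := by
  intro s hs
  obtain ⟨hsT, hsa⟩ := Subgroup.mem_inf.mp hs
  have hs : Odd (orderOf s) := hodd.of_dvd_nat (Subgroup.orderOf_dvd_natCard _ hsa)
  rw [mem_stabilizer_iff] at hsa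
  have hmaps : ∀ x ∈ ({a, b, c} : Set α), s • x ∈ ({a, b, c} : Set α) := fun x hx =>
    (mem_stabilizer_set.mp hsT x).mpr hx
  have hsb := hmaps b (by simp)
  have hsc := hmaps c (by simp)
  simp only [Set.mem_insert_iff, Set.mem_singleton_iff] at hsb hsc
  rw [mem_fixingSubgroup_iff]
  simp only [Set.mem_insert_iff, Set.mem_singleton_iff, forall_eq_or_imp, forall_eq]
  rcases hsb with hsb | hsb | hsb
  · exact absurd (smul_left_cancel s (hsa.trans hsb.symm)) hab
  · rcases hsc with hsc | hsc | hsc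
    · exact absurd (smul_left_cancel s (hsa.trans hsc.symm)) hac
    · exact absurd (smul_left_cancel s (hsb.trans hsc.symm)) hbc
    · exact ⟨hsa, hsb, hsc⟩
  · rcases hsc with hsc | hsc | hsc
    · exact absurd (smul_left_cancel s (hsa.trans hsc.symm)) hac
    · exact absurd (eq_of_smul_swap_of_odd_orderOf hs hsb hsc) hbc
    · exact absurd (smul_left_cancel s (hsb.trans hsc.symm)) hbc

end ThreePoints

theorem hyp3fix_coset_space_of_frobenius_stabilizer_general (G : Type*) [Group G] [Finite G]
    (Ω : Type*) [MulAction G Ω] (h : Hyp3fix G Ω)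
    (ω b c : Ω) (hb : ω ≠ b) (hc : ω ≠ c) (hbc : b ≠ c)
    (hodd : Odd (Nat.card (MulAction.stabilizer G ω)))
    (H : Subgroup G)
    (hH : H = MulAction.stabilizer G ω ⊓ MulAction.stabilizer G b ⊓
        MulAction.stabilizer G c)
    (hHne : H ≠ ⊥) :
    Hyp3fix G (G ⧸ H) ∧
    ∀ g : G, g ≠ 1 → (∃ x : G ⧸ H, g • x = x) →
      Nat.card {x : G ⧸ H | g • x = x} = 3 := by
  obtain rfl : H = fixingSubgroup G {ω, b, c} := by
    ext g
    simp [hH, mem_fixingSubgroup_iff, and_assoc]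
  have := h.1
  have hT := h.isExactFixedSet hb hc hbc
  have hT3 : ({ω, b, c} : Set Ω).ncard = 3 := by
    rw [Set.ncard_insert_of_notMem (by simp [hb, hc]), Set.ncard_pair hbc]
  have hHω : fixingSubgroup G ({ω, b, c} : Set Ω) ≤ stabilizer G ω :=
    fun g hg => (mem_fixingSubgroup_iff G).mp hg ω (by simp)
  have hH3 : 3 ≤ Nat.card (fixingSubgroup G ({ω, b, c} : Set Ω)) := by
    obtain ⟨n, hn⟩ := hodd.of_dvd_nat (Subgroup.card_dvd_of_le hHω)
    have := mt Subgroup.card_eq_one.mp hHne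
    omega
  have hindex := hT3 ▸ relIndex_fixingSubgroup_eq_ncard hT (Set.toFinite _) (by simp)
    (stabilizer_inf_stabilizer_le_fixingSubgroup hb hc hbc hodd) (hT3 ▸ hH3) hHne
  have hthree : ∀ g : G, g ≠ 1 → (∃ x : G ⧸ fixingSubgroup G {ω, b, c}, g • x = x) →
      Nat.card {x : G ⧸ fixingSubgroup G {ω, b, c} | g • x = x} = 3 := by
    rintro g hg ⟨x, hx⟩
    rw [Nat.card_coe_set_eq, ← hindex]
    exact ncard_fixedBy_quotient hT hg ⟨x, hx⟩
  obtain ⟨k, hk, hk1⟩ := (fixingSubgroup G _).bot_or_exists_ne_one.resolve_left hHne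
  refine ⟨hyp3fix_of_card_fixedBy_eq_three (faithful_quotient_of_le_stabilizer h.2.1 hHω)
    hthree hk1 (x₀ := ((1 : G) : G ⧸ fixingSubgroup G {ω, b, c})) ?_, hthree⟩
  exact mk_mem_fixedBy_quotient_iff.mpr (by simpa using hk)

/-- Suppose `(G, Ω)` satisfies Hypothesis (3fix) and `|Ω| ≥ 7`. Let `ω ∈ Ω` with
`|G_ω|` odd, and suppose `H`, the pointwise stabilizer of three distinct points one of
which is `ω`, is nontrivial and is a Frobenius complement in `G_ω`. Then, for the coset
space `Λ = G/H` with the natural `G`-action, `(G, Λ)` satisfies Hypothesis (3fix) and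
every nontrivial element of `G` fixing at least one point of `Λ` fixes exactly three
points of `Λ`. -/
theorem hyp3fix_coset_space_of_frobenius_stabilizer (G : Type*) [Group G] [Finite G]
    (Ω : Type*) [Finite Ω] [MulAction G Ω] (h : Hyp3fix G Ω)
    (hΩ : 7 ≤ Nat.card Ω) (ω b c : Ω) (hb : ω ≠ b) (hc : ω ≠ c) (hbc : b ≠ c)
    (hodd : Odd (Nat.card (MulAction.stabilizer G ω)))
    (H : Subgroup G)
    (hH : H = MulAction.stabilizer G ω ⊓ MulAction.stabilizer G b ⊓
        MulAction.stabilizer G c)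
    (hHne : H ≠ ⊥) (hHlt : H < MulAction.stabilizer G ω)
    (hfrob : ∀ x ∈ MulAction.stabilizer G ω, x ∉ H →
        H ⊓ H.map (MulAut.conj x).toMonoidHom = ⊥) :
    Hyp3fix G (G ⧸ H) ∧
    ∀ g : G, g ≠ 1 → (∃ x : G ⧸ H, g • x = x) →
      Nat.card {x : G ⧸ H | g • x = x} = 3 :=
  hyp3fix_coset_space_of_frobenius_stabilizer_general G Ω h ω b c hb hc hbc hodd H hH hHne
end

section
/- Let P be a finite 3-group of order at least 27 and let H ≤ P be a subgroup of order 3 such that the centralizer of H in P has order 9. Let Ω be the coset space P/H with the natural P-action by multiplication. Then (P, Ω) satisfies Hypothesis (3fix). -/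
/-!
A nontrivial `g` fixing the coset `xH` has `x⁻¹gx` generating `H` (as `|H| = 3` is prime), so the
cosets fixed by `g` are exactly `x • N/H` with `N = N_P(H)`: every nontrivial element fixes no
point or exactly `|N : H|` points, the nontrivial elements of `H` being of the second kind. In a
`3`-group `N/C_P(H)` embeds in `Aut(H) ≅ C₂`, so `N = C_P(H)` and `|N : H| = 3`; since
`|P/H| ≥ 9`, an element fixing every point is then trivial.
-/

open MulAction Pointwise Subgroup

namespace Subgroup

variable {G : Type*} [Group G] {H : Subgroup G}

theorem zpowers_eq_of_card_prime (hH : (Nat.card H).Prime) {h : G} (hh : h ∈ H) (h1 : h ≠ 1) :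
    zpowers h = H := by
  have : Fact (Nat.card H).Prime := ⟨hH⟩
  have htop := zpowers_eq_top_of_prime_card (G := H) rfl (g := ⟨h, hh⟩)
    (by simpa [Subtype.ext_iff] using h1)
  have hmap := congrArg (map H.subtype) htop
  rwa [MonoidHom.map_zpowers, ← MonoidHom.range_eq_map, range_subtype] at hmap

theorem mem_normalizer_of_conj_mem (hH : (Nat.card H).Prime) {h : G} (hh : h ∈ H) (h1 : h ≠ 1)
    {y : G} (hy : y⁻¹ * h * y ∈ H) : y ∈ normalizer (H : Set G) := by
  have hconj : y⁻¹ * h * y ≠ 1 := by simpa [mul_assoc, inv_mul_eq_one] using h1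
  rw [← inv_mem_iff, mem_normalizer_iff_map_conj_eq]
  calc H.map (MulAut.conj y⁻¹).toMonoidHom = (zpowers h).map (MulAut.conj y⁻¹).toMonoidHom := by
        rw [zpowers_eq_of_card_prime hH hh h1]
    _ = zpowers (y⁻¹ * h * y) := by simp [MonoidHom.map_zpowers]
    _ = H := zpowers_eq_of_card_prime hH hy hconj

theorem _root_.IsPGroup.normalizer_le_centralizer_of_card_eq {p : ℕ} [Fact p.Prime] [Finite G]
    (hG : IsPGroup p G) (hH : Nat.card H = p) :
    normalizer (H : Set G) ≤ centralizer (H : Set G) := by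
  -- `N(H)/C(H)` embeds in `Aut(H)`, whose order `p - 1` is prime to the `p`-power `|N(H)|`.
  have hdvd_aut := card_dvd_of_injective _ (QuotientGroup.kerLift_injective H.normalizerMonoidHom)
  rw [normalizerMonoidHom_ker, ← index, ← relIndex] at hdvd_aut
  have : IsCyclic H := isCyclic_of_prime_card hH
  have : Finite H := Nat.finite_of_card_ne_zero (by simp [hH, (Fact.out : p.Prime).ne_zero])
  rw [IsCyclic.card_mulAut, hH] at hdvd_aut
  obtain ⟨k, hk⟩ := (hG.to_subgroup (normalizer (H : Set G))).exists_card_eq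
  have hdvd_card := relIndex_dvd_card (centralizer (H : Set G)) (normalizer (H : Set G))
  rw [hk] at hdvd_card
  refine relIndex_eq_one.mp (Nat.eq_one_of_dvd_coprimes ?_ hdvd_card hdvd_aut)
  rw [Nat.totient_prime Fact.out]
  exact .pow_left _
    ((Nat.coprime_self_sub_right (Fact.out : p.Prime).one_le).mpr (Nat.coprime_one_right p))

end Subgroup

namespace QuotientGroup

variable {G : Type*} [Group G] {H : Subgroup G}

theorem mk_mem_fixedBy_iff {g x : G} :
    (x : G ⧸ H) ∈ fixedBy (G ⧸ H) g ↔ x⁻¹ * g * x ∈ H := by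
  rw [mem_fixedBy, MulAction.Quotient.smul_mk, smul_eq_mul, QuotientGroup.eq, ← inv_mem_iff]
  simp [mul_assoc]

theorem stabilizer_mk_one (K : Subgroup G) :
    stabilizer K ((1 : G) : G ⧸ H) = H.subgroupOf K := by
  ext k
  change (k : G) • ((1 : G) : G ⧸ H) = _ ↔ _
  rw [MulAction.Quotient.smul_mk, smul_eq_mul, mul_one,
    mem_subgroupOf, QuotientGroup.eq, mul_one, inv_mem_iff]

theorem ncard_orbit_mk_one (K : Subgroup G) :
    (orbit K ((1 : G) : G ⧸ H)).ncard = H.relIndex K := by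
  rw [← index_stabilizer, stabilizer_mk_one, relIndex]

theorem mem_orbit_mk_one_iff {K : Subgroup G} (hHK : H ≤ K) {y : G} :
    (y : G ⧸ H) ∈ orbit K ((1 : G) : G ⧸ H) ↔ y ∈ K := by
  refine ⟨fun ⟨k, hk⟩ ↦ ?_, fun hy ↦ ⟨⟨y, hy⟩, ?_⟩⟩
  · change (k : G) • ((1 : G) : G ⧸ H) = y at hk
    rw [MulAction.Quotient.smul_mk, smul_eq_mul, mul_one, QuotientGroup.eq] at hk
    simpa using K.mul_mem k.2 (hHK hk)
  · change y • ((1 : G) : G ⧸ H) = y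
    rw [MulAction.Quotient.smul_mk, smul_eq_mul, mul_one]

theorem fixedBy_eq_orbit_normalizer (hH : (Nat.card H).Prime) {h : G} (hh : h ∈ H)
    (h1 : h ≠ 1) : fixedBy (G ⧸ H) h = orbit (normalizer (H : Set G)) ((1 : G) : G ⧸ H) := by
  ext ω
  obtain ⟨y, rfl⟩ := QuotientGroup.mk_surjective ω
  rw [mk_mem_fixedBy_iff, mem_orbit_mk_one_iff le_normalizer]
  exact ⟨mem_normalizer_of_conj_mem hH hh h1, fun hy ↦ (mem_normalizer_iff''.mp hy h).mp hh⟩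

theorem ncard_fixedBy_of_mem (hH : (Nat.card H).Prime) {h : G} (hh : h ∈ H) (h1 : h ≠ 1) :
    (fixedBy (G ⧸ H) h).ncard = H.relIndex (normalizer (H : Set G)) := by
  rw [fixedBy_eq_orbit_normalizer hH hh h1, ncard_orbit_mk_one]

theorem ncard_fixedBy_le (hH : (Nat.card H).Prime) {g : G} (hg : g ≠ 1) :
    (fixedBy (G ⧸ H) g).ncard ≤ H.relIndex (normalizer (H : Set G)) := by
  obtain hempty | ⟨ω, hω⟩ := (fixedBy (G ⧸ H) g).eq_empty_or_nonempty
  · simp [hempty]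
  obtain ⟨x, rfl⟩ := QuotientGroup.mk_surjective ω
  rw [mk_mem_fixedBy_iff] at hω
  have hconj : x⁻¹ * g * x ≠ 1 := by simpa [mul_assoc, inv_mul_eq_one] using hg
  have hfix : fixedBy (G ⧸ H) g = x • fixedBy (G ⧸ H) (x⁻¹ * g * x) := by
    rw [smul_fixedBy]; group
  rw [hfix, Set.ncard_smul_set, ncard_fixedBy_of_mem hH hω hconj]

end QuotientGroup

theorem hyp3fix_of_ncard_fixedBy {G Ω : Type*} [Group G] [MulAction G Ω] [IsPretransitive G Ω]
    [Finite Ω] (hΩ : 3 < Nat.card Ω) (hle : ∀ g : G, g ≠ 1 → (fixedBy Ω g).ncard ≤ 3)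
    (hex : ∃ g : G, g ≠ 1 ∧ 3 ≤ (fixedBy Ω g).ncard) : Hyp3fix G Ω := by
  refine ⟨‹_›, fun g hg ↦ ?_, fun g a b c d hab hac had hbc hbd hcd ha hb hc hd ↦ ?_, ?_⟩
  · by_contra h1
    have := hle g h1
    rw [show fixedBy Ω g = Set.univ from Set.eq_univ_of_forall hg, Set.ncard_univ] at this
    omega
  · by_contra h1
    have hsub : ({a, b, c, d} : Set Ω) ⊆ fixedBy Ω g := by
      simp [Set.insert_subset_iff, ha, hb, hc, hd]
    have := (Set.ncard_le_ncard hsub).trans (hle g h1)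
    rw [Set.ncard_insert_of_notMem (by simp [hab, hac, had]),
      Set.ncard_insert_of_notMem (by simp [hbc, hbd]), Set.ncard_pair hcd] at this
    omega
  · obtain ⟨g, hg, h3⟩ := hex
    obtain ⟨a, b, c, ha, hb, hc, hab, hac, hbc⟩ := (Set.two_lt_ncard_iff (Set.toFinite _)).mp h3
    exact ⟨g, hg, a, b, c, hab, hac, hbc, ha, hb, hc⟩

/-- Let `P` be a finite `3`-group of order at least `27` and `H ≤ P` a subgroup of
order `3` whose centralizer in `P` has order `9`. Then `P` acting on the coset space
`P/H` satisfies Hypothesis (3fix). -/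
theorem hyp3fix_of_three_group_maximal_class (P : Type*) [Group P] [Finite P]
    (hP : IsPGroup 3 P) (hcard : 27 ≤ Nat.card P)
    (H : Subgroup P) (hH : Nat.card H = 3)
    (hcent : Nat.card (Subgroup.centralizer (H : Set P)) = 9) :
    Hyp3fix P (P ⧸ H) := by
  have : Fact (Nat.Prime 3) := ⟨Nat.prime_three⟩
  have hprime : (Nat.card H).Prime := hH ▸ Nat.prime_three
  have hnorm : normalizer (H : Set P) = centralizer (H : Set P) :=
    le_antisymm (hP.normalizer_le_centralizer_of_card_eq hH) (centralizer_le_normalizer _)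
  have hrel : H.relIndex (normalizer (H : Set P)) = 3 := by
    have := relIndex_mul_relIndex ⊥ H _ bot_le le_normalizer
    rw [relIndex_bot_left, relIndex_bot_left, hH, hnorm, hcent] at this
    rw [hnorm]
    omega
  have hΩ : 3 < Nat.card (P ⧸ H) := by
    have := H.index_mul_card
    rw [hH] at this
    exact (by omega : 3 < H.index)
  obtain ⟨h, hh, h1⟩ := H.bot_or_exists_ne_one.resolve_left (by
    rintro rfl; simp at hH)
  exact hyp3fix_of_ncard_fixedBy hΩ (fun g hg ↦ hrel ▸ QuotientGroup.ncard_fixedBy_le hprime hg)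
    ⟨h, h1, (QuotientGroup.ncard_fixedBy_of_mem hprime hh h1).trans hrel |>.ge⟩
end

section
/- Let F be a finite group with a nontrivial normal subgroup K and a nontrivial subgroup H such that K ∩ H = 1, KH = F, and the centralizer C_K(h) is trivial for every nontrivial h ∈ H (i.e. F is a Frobenius group with kernel K and complement H). Let Z be a cyclic group of order 3, let G = Z × F, identify H with the subgroup {1} × H of G, and let Ω be the coset space G/H with the natural G-action. Then (G, Ω) satisfies Hypothesis (3fix); moreover every nontrivial element of G fixes either no point or exactly three points of Ω. -/
/-- In a Frobenius group, a nontrivial element lies in at most one conjugate of the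
complement `H`: if `u⁻¹ f u ∈ H` and `v⁻¹ f v ∈ H` with `f ≠ 1`, then `uH = vH`. -/
theorem frob_unique' {F : Type*} [Group F] {K H : Subgroup F} (hKnormal : K.Normal)
    (hKH : K ⊓ H = ⊥)
    (hprod : ∀ f : F, ∃ k ∈ K, ∃ h ∈ H, f = k * h)
    (hfrob : ∀ h ∈ H, h ≠ 1 → ∀ k ∈ K, h * k = k * h → k = 1)
    {f u v : F} (hf : f ≠ 1)
    (hu : u⁻¹ * f * u ∈ H) (hv : v⁻¹ * f * v ∈ H) : u⁻¹ * v ∈ H := by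
  obtain ⟨k, hk, h, hh, hc⟩ := hprod (u⁻¹ * v)
  have hv' : v = u * (k * h) := by rw [← hc]; group
  have ha1 : u⁻¹ * f * u ≠ 1 := by
    intro h0
    apply hf
    have h1 : f = u * (u⁻¹ * f * u) * u⁻¹ := by group
    rw [h0] at h1; simpa using h1
  have hkak : k⁻¹ * (u⁻¹ * f * u) * k ∈ H := by
    have h2 : k⁻¹ * (u⁻¹ * f * u) * k = h * (v⁻¹ * f * v) * h⁻¹ := by
      rw [hv']; group
    rw [h2]; exact mul_mem (mul_mem hh hv) (inv_mem hh)
  have hcm : (u⁻¹ * f * u)⁻¹ * (k⁻¹ * (u⁻¹ * f * u) * k) ∈ K ⊓ H := by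
    refine Subgroup.mem_inf.mpr ⟨?_, ?_⟩
    · have h1 : (u⁻¹ * f * u)⁻¹ * k⁻¹ * ((u⁻¹ * f * u)⁻¹)⁻¹ ∈ K :=
        hKnormal.conj_mem _ (inv_mem hk) _
      have h2 : (u⁻¹ * f * u)⁻¹ * (k⁻¹ * (u⁻¹ * f * u) * k) =
          ((u⁻¹ * f * u)⁻¹ * k⁻¹ * ((u⁻¹ * f * u)⁻¹)⁻¹) * k := by group
      rw [h2]; exact mul_mem h1 hk
    · exact mul_mem (inv_mem hu) hkak
  rw [hKH, Subgroup.mem_bot] at hcm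
  have h3 : k⁻¹ * (u⁻¹ * f * u) * k = u⁻¹ * f * u := (inv_mul_eq_one.mp hcm).symm
  have hak : (u⁻¹ * f * u) * k = k * (u⁻¹ * f * u) := by
    have h4 : k * (k⁻¹ * (u⁻¹ * f * u) * k) = k * (u⁻¹ * f * u) := congrArg (k * ·) h3
    rwa [show k * (k⁻¹ * (u⁻¹ * f * u) * k) = (u⁻¹ * f * u) * k by group] at h4
  have hk1 : k = 1 := hfrob _ hu ha1 k hk hak
  rw [hc, hk1, one_mul]; exact hh

/-- Let `F` be a finite Frobenius group with kernel `K` and complement `H` (i.e. `K`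
is a nontrivial normal subgroup, `H` a nontrivial subgroup, `K ∩ H = 1`, `KH = F` and
`C_K(h) = 1` for all nontrivial `h ∈ H`). Let `Z` be a cyclic group of order `3` and
`G = Z × F`, and identify `H` with `{1} × H ≤ G`. Then `G` acting on the coset space
`G/H` satisfies Hypothesis (3fix), and every nontrivial element of `G` fixes either no
point or exactly three points of `G/H`. -/
theorem hyp3fix_of_three_times_frobenius (F : Type*) [Group F] [Finite F]
    (K H : Subgroup F) (hKnormal : K.Normal) (hK : K ≠ ⊥) (hH : H ≠ ⊥)
    (hKH : K ⊓ H = ⊥) (hprod : ∀ f : F, ∃ k ∈ K, ∃ h ∈ H, f = k * h)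
    (hfrob : ∀ h ∈ H, h ≠ 1 → ∀ k ∈ K, h * k = k * h → k = 1)
    (Z : Type*) [Group Z] [Finite Z] (hZcyc : IsCyclic Z) (hZ : Nat.card Z = 3) :
    Hyp3fix (Z × F) ((Z × F) ⧸ (Subgroup.prod (⊥ : Subgroup Z) H)) ∧
    ∀ g : Z × F, g ≠ 1 →
      Nat.card {x : (Z × F) ⧸ (Subgroup.prod (⊥ : Subgroup Z) H) | g • x = x} = 0 ∨
      Nat.card {x : (Z × F) ⧸ (Subgroup.prod (⊥ : Subgroup Z) H) | g • x = x} = 3 := by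
  classical
  set H' : Subgroup (Z × F) := (⊥ : Subgroup Z).prod H with hH'def
  have memH' : ∀ p : Z × F, p ∈ H' ↔ p.1 = 1 ∧ p.2 ∈ H := by
    intro p; simp [hH'def, Subgroup.mem_prod]
  have fix_iff : ∀ (g x : Z × F),
      (g • (QuotientGroup.mk x : (Z × F) ⧸ H') = QuotientGroup.mk x) ↔ x⁻¹ * g * x ∈ H' := by
    intro g x
    rw [MulAction.Quotient.smul_mk, QuotientGroup.eq]
    rw [show (g • x)⁻¹ * x = (x⁻¹ * g * x)⁻¹ by rw [smul_eq_mul]; group]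
    exact inv_mem_iff
  have fix_iff' : ∀ (z : Z) (f : F) (w : Z) (u : F),
      ((z, f) • (QuotientGroup.mk (w, u) : (Z × F) ⧸ H') = QuotientGroup.mk (w, u)) ↔
        z = 1 ∧ u⁻¹ * f * u ∈ H := by
    intro z f w u
    rw [fix_iff, memH']
    have h1 : ((w, u)⁻¹ * (z, f) * (w, u)) = (w⁻¹ * z * w, u⁻¹ * f * u) := rfl
    rw [h1]
    have h2 : w⁻¹ * z * w = 1 ↔ z = 1 := by
      constructor
      · intro hzz
        have := congrArg (fun x => w * x * w⁻¹) hzz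
        simpa [mul_assoc] using this
      · rintro rfl; simp
    simp [h2]
  have mk_eq : ∀ (w w' : Z) (u u' : F),
      (QuotientGroup.mk (w, u) : (Z × F) ⧸ H') = QuotientGroup.mk (w', u') ↔
        w = w' ∧ u⁻¹ * u' ∈ H := by
    intro w w' u u'
    rw [QuotientGroup.eq, memH']
    have h1 : ((w, u)⁻¹ * (w', u')) = (w⁻¹ * w', u⁻¹ * u') := rfl
    rw [h1]
    simp [inv_mul_eq_one]
  haveI : Fintype Z := Fintype.ofFinite Z
  have cardZ : Fintype.card Z = 3 := by rw [← Nat.card_eq_fintype_card, hZ]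
  have e : Z ≃ Fin 3 := Fintype.equivFinOfCardEq cardZ
  refine ⟨⟨?_, ?_, ?_, ?_⟩, ?_⟩
  · -- transitive
    constructor
    intro x y
    obtain ⟨a, rfl⟩ := QuotientGroup.mk_surjective x
    obtain ⟨b, rfl⟩ := QuotientGroup.mk_surjective y
    refine ⟨b * a⁻¹, ?_⟩
    rw [MulAction.Quotient.smul_mk]
    congr 1
    rw [smul_eq_mul]; group
  · -- faithful
    rintro ⟨z, f⟩ hfix
    have hz : z = 1 := ((fix_iff' z f 1 1).mp (hfix _)).1
    have hcore : ∀ u : F, u⁻¹ * f * u ∈ H := fun u =>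
      ((fix_iff' z f 1 u).mp (hfix _)).2
    -- f lies in every conjugate of H, hence f = 1
    have hf : f = 1 := by
      by_contra hf1
      obtain ⟨k, hk1⟩ := Subgroup.ne_bot_iff_exists_ne_one.mp hK
      have hkH : (1 : F)⁻¹ * (k : F) ∈ H :=
        frob_unique' hKnormal hKH hprod hfrob hf1 (hcore 1) (hcore k)
      have : (k : F) ∈ K ⊓ H := Subgroup.mem_inf.mpr ⟨k.2, by simpa using hkH⟩
      rw [hKH, Subgroup.mem_bot] at this
      exact hk1 (Subtype.ext this)
    rw [hz, hf]; rfl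
  · -- four fixed points implies identity
    rintro ⟨z, f⟩ a b c d hab hac had hbc hbd hcd hfa hfb hfc hfd
    obtain ⟨⟨wa, ua⟩, rfl⟩ := QuotientGroup.mk_surjective a
    obtain ⟨⟨wb, ub⟩, rfl⟩ := QuotientGroup.mk_surjective b
    obtain ⟨⟨wc, uc⟩, rfl⟩ := QuotientGroup.mk_surjective c
    obtain ⟨⟨wd, ud⟩, rfl⟩ := QuotientGroup.mk_surjective d
    rw [fix_iff'] at hfa hfb hfc hfd
    have hz : z = 1 := hfa.1
    by_cases hf : f = 1
    · rw [hz, hf]; rfl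
    · exfalso
      have key : ∀ u v : F, u⁻¹ * f * u ∈ H → v⁻¹ * f * v ∈ H → u⁻¹ * v ∈ H :=
        fun u v hu hv => frob_unique' hKnormal hKH hprod hfrob hf hu hv
      have wab : wa ≠ wb := fun hw =>
        hab ((mk_eq wa wb ua ub).mpr ⟨hw, key ua ub hfa.2 hfb.2⟩)
      have wac : wa ≠ wc := fun hw =>
        hac ((mk_eq wa wc ua uc).mpr ⟨hw, key ua uc hfa.2 hfc.2⟩)
      have wad : wa ≠ wd := fun hw =>
        had ((mk_eq wa wd ua ud).mpr ⟨hw, key ua ud hfa.2 hfd.2⟩)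
      have wbc : wb ≠ wc := fun hw =>
        hbc ((mk_eq wb wc ub uc).mpr ⟨hw, key ub uc hfb.2 hfc.2⟩)
      have wbd : wb ≠ wd := fun hw =>
        hbd ((mk_eq wb wd ub ud).mpr ⟨hw, key ub ud hfb.2 hfd.2⟩)
      have wcd : wc ≠ wd := fun hw =>
        hcd ((mk_eq wc wd uc ud).mpr ⟨hw, key uc ud hfc.2 hfd.2⟩)
      have hcard4 : ({wa, wb, wc, wd} : Finset Z).card = 4 := by
        rw [Finset.card_insert_of_notMem (by simp [wab, wac, wad]),
            Finset.card_insert_of_notMem (by simp [wbc, wbd]),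
            Finset.card_insert_of_notMem (by simp [wcd]), Finset.card_singleton]
      have hle := Finset.card_le_univ ({wa, wb, wc, wd} : Finset Z)
      rw [hcard4, cardZ] at hle
      omega
  · -- a nontrivial element with three fixed points
    obtain ⟨h₀, hh₀⟩ := Subgroup.ne_bot_iff_exists_ne_one.mp hH
    refine ⟨((1 : Z), (h₀ : F)), ?_, QuotientGroup.mk (e.symm 0, 1),
      QuotientGroup.mk (e.symm 1, 1), QuotientGroup.mk (e.symm 2, 1), ?_, ?_, ?_, ?_, ?_, ?_⟩
    · intro h1
      apply hh₀
      apply Subtype.ext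
      exact congrArg Prod.snd h1
    · intro h1
      have := ((mk_eq _ _ _ _).mp h1).1
      exact absurd (e.symm.injective this) (by decide)
    · intro h1
      have := ((mk_eq _ _ _ _).mp h1).1
      exact absurd (e.symm.injective this) (by decide)
    · intro h1
      have := ((mk_eq _ _ _ _).mp h1).1
      exact absurd (e.symm.injective this) (by decide)
    · exact (fix_iff' 1 h₀ (e.symm 0) 1).mpr ⟨rfl, by simpa using h₀.2⟩
    · exact (fix_iff' 1 h₀ (e.symm 1) 1).mpr ⟨rfl, by simpa using h₀.2⟩
    · exact (fix_iff' 1 h₀ (e.symm 2) 1).mpr ⟨rfl, by simpa using h₀.2⟩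
  · -- fixed point counts
    rintro ⟨z, f⟩ hg
    by_cases hz : z = 1
    · subst hz
      have hf : f ≠ 1 := by intro h0; exact hg (by rw [h0]; rfl)
      by_cases hex : ∃ u : F, u⁻¹ * f * u ∈ H
      · right
        obtain ⟨u₀, hu₀⟩ := hex
        have hbij : Function.Bijective (fun w : Z =>
            (⟨QuotientGroup.mk (w, u₀),
              show ((1, f) : Z × F) • _ = _ from (fix_iff' 1 f w u₀).mpr ⟨rfl, hu₀⟩⟩ :
              {x : (Z × F) ⧸ H' | ((1, f) : Z × F) • x = x})) := by
          constructor
          · intro w w' hww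
            have := Subtype.ext_iff.mp hww
            exact ((mk_eq w w' u₀ u₀).mp this).1
          · rintro ⟨x, hx⟩
            obtain ⟨⟨w, u⟩, rfl⟩ := QuotientGroup.mk_surjective x
            rw [Set.mem_setOf_eq, fix_iff'] at hx
            refine ⟨w, Subtype.ext ?_⟩
            exact (mk_eq w w u₀ u).mpr ⟨rfl,
              frob_unique' hKnormal hKH hprod hfrob hf hu₀ hx.2⟩
        rw [← hZ]
        exact (Nat.card_eq_of_bijective _ hbij).symm
      · left
        have : IsEmpty {x : (Z × F) ⧸ H' | ((1, f) : Z × F) • x = x} := by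
          refine ⟨fun p => ?_⟩
          obtain ⟨x, hx⟩ := p
          obtain ⟨⟨w, u⟩, rfl⟩ := QuotientGroup.mk_surjective x
          rw [Set.mem_setOf_eq, fix_iff'] at hx
          exact hex ⟨u, hx.2⟩
        exact Nat.card_of_isEmpty
    · left
      have : IsEmpty {x : (Z × F) ⧸ H' | (z, f) • x = x} := by
        refine ⟨fun p => ?_⟩
        obtain ⟨x, hx⟩ := p
        obtain ⟨⟨w, u⟩, rfl⟩ := QuotientGroup.mk_surjective x
        rw [Set.mem_setOf_eq, fix_iff'] at hx
        exact hz hx.1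
      exact Nat.card_of_isEmpty
end

section
/- Let p be a prime and let K be a finite field with |K| = 3^p. Let G be the set of all permutations f of K for which there exist a ∈ K with a ≠ 0, b ∈ K, and a ring automorphism σ of K such that f(x) = a·σ(x) + b for all x ∈ K. Then G is a subgroup of the group of permutations of K, and with its natural action on Ω = K, the pair (G, Ω) satisfies Hypothesis (3fix). -/
theorem Subfield.eq_top_of_prime_lt_card {K : Type*} [Field K] [Finite K] {r p : ℕ}
    (hr : r.Prime) (hp : p.Prime) (hK : Nat.card K = r ^ p) (F : Subfield K)
    (hF : r < Nat.card F) : F = ⊤ := by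
  set n := Module.finrank F K
  have hKF : Nat.card K = Nat.card F ^ n := Module.natCard_eq_pow_finrank
  obtain ⟨d, -, hd⟩ := (Nat.dvd_prime_pow hr).1 <|
    hK ▸ hKF ▸ dvd_pow_self (Nat.card F) Module.finrank_pos.ne'
  have hdn : d * n = p := Nat.pow_right_injective hr.two_le <| by
    simp only [pow_mul, ← hd, ← hKF, hK]
  have hn : n = 1 := by
    rcases Nat.prime_mul_iff.1 (hdn ▸ hp) with ⟨-, hn⟩ | ⟨-, rfl⟩
    · exact hn
    · simp [hd] at hF
  refine SetLike.coe_injective <| Set.eq_of_subset_of_ncard_le (Set.subset_univ _) ?_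
    (Set.toFinite _)
  rw [Subfield.coe_top, Set.ncard_univ, ← Nat.card_coe_set_eq, SetLike.coe_sort_coe, hKF, hn,
    pow_one]

theorem RingEquiv.eq_refl_of_prime_lt_card_fixed {K : Type*} [Field K] [Finite K] {r p : ℕ}
    (hr : r.Prime) (hp : p.Prime) (hK : Nat.card K = r ^ p) (σ : K ≃+* K) (s : Finset K)
    (hs : r < s.card) (hσ : ∀ x ∈ s, σ x = x) : σ = RingEquiv.refl K := by
  set F := (σ : K →+* K).eqLocusField (RingHom.id K)
  have hsF : (s : Set K) ⊆ F := hσ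
  have hF : r < Nat.card F := by
    calc r < s.card := hs
      _ = Nat.card (s : Set K) := (Nat.card_eq_finsetCard s).symm
      _ ≤ Nat.card F := Nat.card_mono (Set.toFinite _) hsF
  have htop := Subfield.eq_top_of_prime_lt_card hr hp hK F hF
  ext x
  exact (htop ▸ Subfield.mem_top x : x ∈ F)

section SemilinearAffine

variable {K : Type*} [Field K]

variable (K) in
def semilinearAffineGroup : Subgroup (Equiv.Perm K) where
  carrier := {f | ∃ (a b : K) (σ : K ≃+* K), a ≠ 0 ∧ ∀ x, f x = a * σ x + b}
  one_mem' := ⟨1, 0, RingEquiv.refl K, one_ne_zero, fun x => by simp⟩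
  mul_mem' := by
    rintro f g ⟨a, b, σ, ha, hf⟩ ⟨c, d, τ, hc, hg⟩
    refine ⟨a * σ c, a * σ d + b, τ.trans σ, mul_ne_zero ha ((map_ne_zero σ).2 hc), fun x => ?_⟩
    rw [Equiv.Perm.mul_apply, hg, hf, map_add, map_mul, RingEquiv.trans_apply]
    ring
  inv_mem' := by
    rintro f ⟨a, b, σ, ha, hf⟩
    refine ⟨σ.symm a⁻¹, -σ.symm (a⁻¹ * b), σ.symm, (map_ne_zero σ.symm).2 (inv_ne_zero ha),
      fun y => f.injective ?_⟩
    rw [Equiv.Perm.coe_inv, Equiv.apply_symm_apply, hf, map_add, map_mul, map_neg,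
      RingEquiv.apply_symm_apply, RingEquiv.apply_symm_apply, RingEquiv.apply_symm_apply, mul_add,
      mul_inv_cancel_left₀ ha, mul_neg, mul_inv_cancel_left₀ ha, neg_add_cancel_right]

theorem mem_semilinearAffineGroup {f : Equiv.Perm K} :
    f ∈ semilinearAffineGroup K ↔ ∃ (a b : K) (σ : K ≃+* K), a ≠ 0 ∧ ∀ x, f x = a * σ x + b :=
  Iff.rfl

theorem RingEquiv.toEquiv_mem_semilinearAffineGroup (σ : K ≃+* K) :
    σ.toEquiv ∈ semilinearAffineGroup K :=
  ⟨1, 0, σ, one_ne_zero, fun x => by simp⟩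

theorem Equiv.addRight_mem_semilinearAffineGroup (b : K) :
    Equiv.addRight b ∈ semilinearAffineGroup K :=
  ⟨1, b, RingEquiv.refl K, one_ne_zero, fun x => by simp⟩

instance : MulAction.IsPretransitive (semilinearAffineGroup K) K where
  exists_smul_eq x y :=
    ⟨⟨Equiv.addRight (y - x), Equiv.addRight_mem_semilinearAffineGroup _⟩, add_sub_cancel x y⟩

theorem map_div_sub_eq_of_affine_fixed {σ : K ≃+* K} {a b : K} (ha : a ≠ 0) {x₀ x₁ y : K}
    (h₀ : a * σ x₀ + b = x₀) (h₁ : a * σ x₁ + b = x₁) (hy : a * σ y + b = y) :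
    σ ((y - x₀) / (x₁ - x₀)) = (y - x₀) / (x₁ - x₀) := by
  have hsub : ∀ x, a * σ x + b = x → σ (x - x₀) = a⁻¹ * (x - x₀) := fun x hx => by
    rw [eq_inv_mul_iff_mul_eq₀ ha, map_sub]
    linear_combination hx - h₀
  rw [map_div₀, hsub y hy, hsub x₁ h₁, mul_div_mul_left _ _ (inv_ne_zero ha)]

theorem eq_one_and_eq_zero_of_affine_fixed {a b x₀ x₁ : K} (hx : x₀ ≠ x₁)
    (h₀ : a * x₀ + b = x₀) (h₁ : a * x₁ + b = x₁) : a = 1 ∧ b = 0 := by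
  have ha : a = 1 := by
    have : (a - 1) * (x₁ - x₀) = 0 := by linear_combination h₁ - h₀
    simpa [sub_eq_zero, hx.symm] using this
  exact ⟨ha, by linear_combination h₀ - x₀ * ha⟩

theorem semilinearAffineGroup.eq_one_of_prime_lt_card_fixed [Finite K] {r p : ℕ}
    (hr : r.Prime) (hp : p.Prime) (hK : Nat.card K = r ^ p) {f : Equiv.Perm K}
    (hf : f ∈ semilinearAffineGroup K) (s : Finset K) (hs : r < s.card)
    (hfix : ∀ x ∈ s, f x = x) : f = 1 := by
  obtain ⟨a, b, σ, ha, hfx⟩ := hf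
  have haff : ∀ x ∈ s, a * σ x + b = x := fun x hx => hfx x ▸ hfix x hx
  obtain ⟨x₀, h₀, x₁, h₁, hx⟩ := Finset.one_lt_card.1 (hr.one_lt.trans hs)
  have hd : x₁ - x₀ ≠ 0 := sub_ne_zero.2 hx.symm
  set ratio : K → K := fun y => (y - x₀) / (x₁ - x₀)
  have hratio : ratio.Injective := fun y z h => by simpa [ratio, div_left_inj' hd] using h
  have hσ : σ = RingEquiv.refl K := by
    refine RingEquiv.eq_refl_of_prime_lt_card_fixed hr hp hK σ (s.map ⟨ratio, hratio⟩)
      (by rwa [Finset.card_map]) ?_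
    simp only [Finset.mem_map, Function.Embedding.coeFn_mk, forall_exists_index, and_imp,
      forall_apply_eq_imp_iff₂]
    exact fun y hy => map_div_sub_eq_of_affine_fixed ha (haff x₀ h₀) (haff x₁ h₁) (haff y hy)
  subst hσ
  obtain ⟨rfl, rfl⟩ := eq_one_and_eq_zero_of_affine_fixed hx (haff x₀ h₀) (haff x₁ h₁)
  ext x
  simp [hfx]

end SemilinearAffine

theorem card_le_three_of_forall_pow_three_eq_self {R : Type*} [CommRing R] [IsDomain R]
    [Finite R] (h : ∀ x : R, x ^ 3 = x) : Nat.card R ≤ 3 := by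
  classical
  have : Fintype R := Fintype.ofFinite R
  have hroots : (Finset.univ : Finset R) ⊆ {0, 1, -1} := fun x _ => by
    have hx : x * (x - 1) * (x + 1) = 0 := by linear_combination h x
    simpa [sub_eq_zero, eq_neg_iff_add_eq_zero, or_assoc] using hx
  rw [Nat.card_eq_fintype_card, ← Finset.card_univ]
  exact (Finset.card_le_card hroots).trans Finset.card_le_three

theorem frobeniusEquiv_ne_refl {K : Type*} [Field K] [Finite K] [CharP K 3]
    (hK : 3 < Nat.card K) : frobeniusEquiv K 3 ≠ RingEquiv.refl K := fun h =>
  hK.not_ge <| card_le_three_of_forall_pow_three_eq_self fun x => congr($h x)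

/-- Let `p` be a prime, `K` a finite field with `|K| = 3^p`, and let `G` be the set
of permutations of `K` of the form `x ↦ a·σ(x) + b` with `a ≠ 0`, `b ∈ K` and `σ` a
ring automorphism of `K`. Then `G` is a subgroup of the permutation group of `K` and,
with its natural action on `K`, satisfies Hypothesis (3fix). -/
theorem hyp3fix_semilinear_group (p : ℕ) (hp : p.Prime)
    (K : Type*) [Field K] [Fintype K] (hcard : Fintype.card K = 3 ^ p) :
    ∃ G : Subgroup (Equiv.Perm K),
      (∀ f : Equiv.Perm K, f ∈ G ↔
        ∃ (a b : K) (σ : K ≃+* K), a ≠ 0 ∧ ∀ x : K, f x = a * σ x + b) ∧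
      Hyp3fix G K := by
  have hK : Nat.card K = 3 ^ p := Nat.card_eq_fintype_card.trans hcard
  have : CharP K 3 := charP_of_card_eq_prime_pow hcard
  refine ⟨semilinearAffineGroup K, fun _ => mem_semilinearAffineGroup, inferInstance,
    fun g hg => Subtype.ext (Equiv.ext hg), ?_, ?_⟩
  · classical
    intro g a b c d hab hac had hbc hbd hcd ha hb hc hd
    refine Subtype.ext <| semilinearAffineGroup.eq_one_of_prime_lt_card_fixed Nat.prime_three
      hp hK g.2 {a, b, c, d} ?_ ?_
    · rw [Finset.card_eq_four.2 ⟨a, b, c, d, hab, hac, had, hbc, hbd, hcd, rfl⟩]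
      norm_num
    · simp only [Finset.mem_insert, Finset.mem_singleton]
      rintro x (rfl | rfl | rfl | rfl)
      exacts [ha, hb, hc, hd]
  · have h3 : 3 < Nat.card K := hK ▸ lt_self_pow₀ (by norm_num) hp.one_lt
    have : Fact (2 < 3) := ⟨by norm_num⟩
    refine ⟨⟨_, (frobeniusEquiv K 3).toEquiv_mem_semilinearAffineGroup⟩, ?_, 0, 1, -1,
      zero_ne_one, (neg_ne_zero.2 one_ne_zero).symm, (CharP.neg_one_ne_one K 3).symm, ?_, ?_, ?_⟩
    · exact fun h => frobeniusEquiv_ne_refl h3 <|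
        RingEquiv.ext (Equiv.ext_iff.1 congr(Subtype.val $h))
    exacts [map_zero (frobeniusEquiv K 3), map_one (frobeniusEquiv K 3),
      (map_neg (frobeniusEquiv K 3) 1).trans (congrArg _ (map_one _))]
end

section
/- Suppose the finite group G acts on the finite set Ω and (G, Ω) satisfies Hypothesis (3fix). Then the center of G has order 1 or 3. -/
/-- If the finite group `G` acts on the finite set `Ω` and `(G, Ω)` satisfies
Hypothesis (3fix), then the center of `G` has order `1` or `3`. -/
theorem card_center_eq_one_or_three_of_hyp3fix (G : Type*) [Group G] [Finite G]
    (Ω : Type*) [Finite Ω] [MulAction G Ω] (h : Hyp3fix G Ω) :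
    Nat.card (Subgroup.center G) = 1 ∨ Nat.card (Subgroup.center G) = 3 := by
  classical
  obtain ⟨htrans, hfaith, h4, g, hg1, a, b, c, hab, hac, hbc, hga, hgb, hgc⟩ := h
  -- nontrivial central elements have no fixed points
  have hfree : ∀ z : G, z ∈ Subgroup.center G → z ≠ 1 → ∀ ω : Ω, z • ω ≠ ω := by
    intro z hz hz1 ω hω
    apply hz1
    apply hfaith
    intro ω'
    obtain ⟨k, hk⟩ := htrans.exists_smul_eq ω ω'
    rw [← hk, ← mul_smul, ← Subgroup.mem_center_iff.mp hz k, mul_smul, hω]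
  -- all fixed points of g are among a, b, c
  have hfix : ∀ ω : Ω, g • ω = ω → ω = a ∨ ω = b ∨ ω = c := by
    intro ω hω
    by_contra hcon
    push_neg at hcon
    exact hg1 (h4 g a b c ω hab hac (Ne.symm hcon.1) hbc (Ne.symm hcon.2.1)
      (Ne.symm hcon.2.2) hga hgb hgc hω)
  -- central elements preserve the fixed set of g
  have hgz : ∀ z : G, z ∈ Subgroup.center G → ∀ ω : Ω, g • ω = ω → g • (z • ω) = z • ω := by
    intro z hz ω hω
    rw [← mul_smul, Subgroup.mem_center_iff.mp hz g, mul_smul, hω]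
  -- a nontrivial central element moves a to b or c
  have hza : ∀ z : G, z ∈ Subgroup.center G → z ≠ 1 → z • a = b ∨ z • a = c := by
    intro z hz hz1
    rcases hfix (z • a) (hgz z hz a hga) with h1 | h1 | h1
    · exact absurd h1 (hfree z hz hz1 a)
    · exact Or.inl h1
    · exact Or.inr h1
  -- a central element is determined by where it sends a
  have hext : ∀ z w : G, z ∈ Subgroup.center G → w ∈ Subgroup.center G →
      z • a = w • a → z = w := by
    intro z w hz hw hzw
    by_contra hne
    have hmem : w⁻¹ * z ∈ Subgroup.center G := mul_mem (inv_mem hw) hz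
    have h1 : w⁻¹ * z ≠ 1 := fun hh => hne (inv_mul_eq_one.mp hh).symm
    exact hfree _ hmem h1 a (by rw [mul_smul, hzw, ← mul_smul, inv_mul_cancel, one_smul])
  -- hence the center has at most 3 elements
  have hcard : Nat.card (Subgroup.center G) ≤ 3 := by
    have hinj : Function.Injective (fun z : Subgroup.center G =>
        (if (z : G) = 1 then (0 : Fin 3) else if (z : G) • a = b then 1 else 2)) := by
      intro z w hzw
      simp only at hzw
      ext
      by_cases hz1 : (z : G) = 1 <;> by_cases hw1 : (w : G) = 1
      · rw [hz1, hw1]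
      · simp only [hz1, hw1, if_true, if_false] at hzw
        split_ifs at hzw <;> exact absurd hzw (by decide)
      · simp only [hz1, hw1, if_true, if_false] at hzw
        split_ifs at hzw <;> exact absurd hzw (by decide)
      · simp only [hz1, hw1, if_false] at hzw
        by_cases hzb : (z : G) • a = b <;> by_cases hwb : (w : G) • a = b
        · exact hext _ _ z.2 w.2 (by rw [hzb, hwb])
        · simp only [hzb, hwb, if_true, if_false] at hzw
          exact absurd hzw (by decide)
        · simp only [hzb, hwb, if_true, if_false] at hzw
          exact absurd hzw (by decide)
        · have h1 := (hza _ z.2 hz1).resolve_left hzb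
          have h2 := (hza _ w.2 hw1).resolve_left hwb
          exact hext _ _ z.2 w.2 (by rw [h1, h2])
    calc Nat.card (Subgroup.center G) ≤ Nat.card (Fin 3) :=
          Nat.card_le_card_of_injective _ hinj
      _ = 3 := by simp
  have hpos : 0 < Nat.card (Subgroup.center G) := Nat.card_pos
  -- the center cannot have exactly 2 elements
  have hne2 : Nat.card (Subgroup.center G) ≠ 2 := by
    intro h2
    have hnt : Nontrivial (Subgroup.center G) := by
      rw [← Finite.one_lt_card_iff_nontrivial, h2]; norm_num
    obtain ⟨z, hz1⟩ := exists_ne (1 : Subgroup.center G)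
    have hzsq : z * z = 1 := by
      have := pow_card_eq_one' (G := Subgroup.center G) (x := z)
      rwa [h2, pow_two] at this
    set zz : G := (z : G) with hzz
    have hzz1 : zz ≠ 1 := fun hh => hz1 (Subtype.ext hh)
    have hzzsq : zz * zz = 1 := by
      have := congrArg (Subtype.val) hzsq
      exact this
    have hzmem : zz ∈ Subgroup.center G := z.2
    have hback : ∀ ω : Ω, zz • zz • ω = ω := by
      intro ω
      rw [← mul_smul, hzzsq, one_smul]
    rcases hza zz hzmem hzz1 with hd | hd
    · -- zz • a = b, so zz • b = a; consider zz • c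
      have hzb : zz • b = a := by rw [← hd, hback]
      rcases hfix (zz • c) (hgz zz hzmem c hgc) with h1 | h1 | h1
      · -- zz • c = a = zz • b ⇒ c = b
        exact hbc (smul_left_cancel zz (by rw [h1, hzb])).symm
      · -- zz • c = b = zz • a ⇒ c = a
        exact hac (smul_left_cancel zz (by rw [h1, hd])).symm
      · exact hfree zz hzmem hzz1 c h1
    · -- zz • a = c, so zz • c = a; consider zz • b
      have hzc : zz • c = a := by rw [← hd, hback]
      rcases hfix (zz • b) (hgz zz hzmem b hgb) with h1 | h1 | h1
      · -- zz • b = a = zz • c ⇒ b = c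
        exact hbc (smul_left_cancel zz (by rw [h1, hzc]))
      · exact hfree zz hzmem hzz1 b h1
      · -- zz • b = c = zz • a ⇒ b = a
        exact hab (smul_left_cancel zz (by rw [h1, hd])).symm
  omega
end

section
/- Suppose the finite group G acts on the finite set Ω, (G, Ω) satisfies Hypothesis (3fix), and let α ∈ Ω. Then: (a) if some element of G_α of 2-power order fixes exactly three points of Ω, then G_α contains a Sylow 2-subgroup of G; (b) if some element of G_α of 3-power order fixes exactly three points of Ω, then 3 divides |Ω| and G_α does not contain any Sylow 3-subgroup of G; (c) for every prime p ≥ 5 dividing |G_α|, some Sylow p-subgroup of G is contained in G_α. -/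
namespace MulAction

variable {G Ω : Type*} [Group G] [MulAction G Ω]

theorem fixedPoints_zpowers (x : G) : fixedPoints (Subgroup.zpowers x) Ω = fixedBy Ω x := by
  ext ω
  refine ⟨fun h ↦ h ⟨x, Subgroup.mem_zpowers x⟩, fun h ⟨g, hg⟩ ↦ ?_⟩
  obtain ⟨j, rfl⟩ := Subgroup.mem_zpowers_iff.mp hg
  exact mem_fixedBy_zpow h j

theorem card_modEq_card_fixedBy [Finite Ω] {p n : ℕ} [Fact p.Prime] {x : G}
    (hx : orderOf x = p ^ n) : Nat.card Ω ≡ Nat.card (fixedBy Ω x) [MOD p] := by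
  have hp : IsPGroup p (Subgroup.zpowers x) := IsPGroup.of_card (by rw [Nat.card_zpowers, hx])
  simpa only [fixedPoints_zpowers] using hp.card_modEq_card_fixedPoints Ω

theorem prime_dvd_card_iff_dvd_card_fixedBy [Finite Ω] {p n : ℕ} [Fact p.Prime] {x : G}
    (hx : orderOf x = p ^ n) : p ∣ Nat.card Ω ↔ p ∣ Nat.card (fixedBy Ω x) :=
  (card_modEq_card_fixedBy hx).dvd_iff dvd_rfl

theorem card_fixedBy_le_three
    (h4 : ∀ g : G, ∀ a b c d : Ω, a ≠ b → a ≠ c → a ≠ d → b ≠ c → b ≠ d → c ≠ d →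
      g • a = a → g • b = b → g • c = c → g • d = d → g = 1)
    [Finite Ω] {x : G} (hx : x ≠ 1) : Nat.card (fixedBy Ω x) ≤ 3 := by
  rw [Nat.card_coe_set_eq]
  by_contra! h
  obtain ⟨a, ha⟩ := Set.nonempty_of_ncard_ne_zero (s := fixedBy Ω x) (by omega)
  have : 2 < (fixedBy Ω x \ {a}).ncard := by
    rw [Set.ncard_sdiff_singleton_of_mem ha]
    omega
  obtain ⟨b, c, d, ⟨hb, hab⟩, ⟨hc, hac⟩, ⟨hd, had⟩, hbc, hbd, hcd⟩ :=
    (Set.two_lt_ncard_iff).mp this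
  exact hx (h4 x a b c d (Ne.symm hab) (Ne.symm hac) (Ne.symm had) hbc hbd hcd ha hb hc hd)

variable [IsPretransitive G Ω] {p : ℕ} [Fact p.Prime]

theorem exists_sylow_le_stabilizer_of_not_dvd_card (hp : ¬ p ∣ Nat.card Ω) (α : Ω) :
    ∃ S : Sylow p G, (S : Subgroup G) ≤ stabilizer G α := by
  obtain ⟨S⟩ : Nonempty (Sylow p G) := inferInstance
  obtain ⟨β, hβ⟩ := S.isPGroup'.nonempty_fixed_point_of_prime_not_dvd_card Ω hp
  obtain ⟨g, rfl⟩ := exists_smul_eq G β α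
  refine ⟨g • S, ?_⟩
  rw [Sylow.coe_subgroup_smul, stabilizer_smul_eq_stabilizer_map_conj]
  exact Subgroup.map_mono fun s hs ↦ hβ ⟨s, hs⟩

theorem not_sylow_le_stabilizer_of_dvd_card [Finite G] (hp : p ∣ Nat.card Ω) (α : Ω)
    (S : Sylow p G) :
    ¬ (S : Subgroup G) ≤ stabilizer G α := fun hS ↦
  S.not_dvd_index <|
    (index_stabilizer_of_transitive G α ▸ hp).trans (Subgroup.index_dvd_of_le hS)

theorem exists_sylow_le_stabilizer_of_card_fixedBy_lt [Finite G] [Finite Ω]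
    (hfix : ∀ x : G, x ≠ 1 → Nat.card (fixedBy Ω x) < p) (α : Ω)
    (hpα : p ∣ Nat.card (stabilizer G α)) :
    ∃ S : Sylow p G, (S : Subgroup G) ≤ stabilizer G α := by
  obtain ⟨⟨x, hxα⟩, hx⟩ := exists_prime_orderOf_dvd_card' (G := stabilizer G α) p hpα
  rw [Subgroup.orderOf_mk] at hx
  have hx1 : x ≠ 1 := fun h1 ↦ (Fact.out : p.Prime).ne_one (by rw [← hx, h1, orderOf_one])
  have hfix_pos : 0 < Nat.card (fixedBy Ω x) := Nat.card_pos_iff.mpr ⟨⟨α, hxα⟩, inferInstance⟩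
  refine exists_sylow_le_stabilizer_of_not_dvd_card (fun hpΩ ↦ ?_) α
  have hpfix := (prime_dvd_card_iff_dvd_card_fixedBy (n := 1) (by rwa [pow_one])).mp hpΩ
  exact (Nat.le_of_dvd hfix_pos hpfix).not_gt (hfix x hx1)

end MulAction

/-- Suppose `(G, Ω)` satisfies Hypothesis (3fix) and `α ∈ Ω`. Then:
(a) if some element of `G_α` of `2`-power order has exactly three fixed points, then
`G_α` contains a Sylow `2`-subgroup of `G`;
(b) if some element of `G_α` of `3`-power order has exactly three fixed points, then
`3 ∣ |Ω|` and `G_α` contains no Sylow `3`-subgroup of `G`;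
(c) for every prime `p ≥ 5` dividing `|G_α|`, some Sylow `p`-subgroup of `G` is
contained in `G_α`. -/
theorem hyp3fix_sylow_in_stabilizer (G : Type*) [Group G] [Finite G]
    (Ω : Type*) [Finite Ω] [MulAction G Ω] (h : Hyp3fix G Ω) (α : Ω) :
    ((∃ x ∈ MulAction.stabilizer G α, (∃ n : ℕ, orderOf x = 2 ^ n) ∧
        Nat.card {ω : Ω | x • ω = ω} = 3) →
      ∃ S : Sylow 2 G, (S : Subgroup G) ≤ MulAction.stabilizer G α) ∧
    ((∃ x ∈ MulAction.stabilizer G α, (∃ n : ℕ, orderOf x = 3 ^ n) ∧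
        Nat.card {ω : Ω | x • ω = ω} = 3) →
      3 ∣ Nat.card Ω ∧
        ∀ S : Sylow 3 G, ¬ ((S : Subgroup G) ≤ MulAction.stabilizer G α)) ∧
    (∀ p : ℕ, p.Prime → 5 ≤ p → p ∣ Nat.card (MulAction.stabilizer G α) →
      ∃ S : Sylow p G, (S : Subgroup G) ≤ MulAction.stabilizer G α) := by
  obtain ⟨_, -, h4, -⟩ := h
  refine ⟨?_, ?_, ?_⟩
  · rintro ⟨x, -, ⟨n, hx⟩, hfix⟩
    refine MulAction.exists_sylow_le_stabilizer_of_not_dvd_card (fun h2 ↦ ?_) α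
    have : 2 ∣ 3 := hfix ▸ (MulAction.prime_dvd_card_iff_dvd_card_fixedBy hx).mp h2
    omega
  · rintro ⟨x, -, ⟨n, hx⟩, hfix⟩
    have : Fact (Nat.Prime 3) := ⟨Nat.prime_three⟩
    have h3 : 3 ∣ Nat.card Ω :=
      (MulAction.prime_dvd_card_iff_dvd_card_fixedBy hx).mpr (hfix ▸ dvd_rfl)
    exact ⟨h3, MulAction.not_sylow_le_stabilizer_of_dvd_card h3 α⟩
  · intro p hp hp5 hpα
    have : Fact p.Prime := ⟨hp⟩
    exact MulAction.exists_sylow_le_stabilizer_of_card_fixedBy_lt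
      (fun x hx ↦ (MulAction.card_fixedBy_le_three h4 hx).trans_lt (by omega)) α hpα
end

section
/- Suppose the finite group G acts on the finite set Ω and (G, Ω) satisfies Hypothesis (3fix). Then 3 divides the order of G. -/
open MulAction Subgroup

section

variable {G : Type*} [Group G] {p : ℕ}

theorem exists_mem_normalizer_notMem_of_lt {T Q : Subgroup G} [Group.IsNilpotent Q] (h : T < Q) :
    ∃ x ∈ Q, x ∈ normalizer (T : Set G) ∧ x ∉ T := by
  have hne : T.subgroupOf Q < ⊤ := lt_top_iff_ne_top.mpr (mt subgroupOf_eq_top.mp h.not_ge)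
  have hlt := Group.normalizerCondition_of_isNilpotent _ hne
  rw [← subgroupOf_normalizer_eq h.le] at hlt
  obtain ⟨x, hxN, hxT⟩ := SetLike.exists_of_lt hlt
  exact ⟨x, x.2, hxN, hxT⟩

theorem card_subgroupOf_of_le {H K : Subgroup G} (h : H ≤ K) :
    Nat.card (H.subgroupOf K) = Nat.card H :=
  Nat.card_congr (subgroupOfEquivOfLe h).toEquiv

theorem exists_conj_mem_of_card_eq [Finite G] [Fact p.Prime] (H : Subgroup G) {P Q : Subgroup G}
    (hP : P ≤ H) (hQ : Q ≤ H) (hPc : Nat.card P = p ^ (Nat.card H).factorization p)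
    (hQc : Nat.card Q = p ^ (Nat.card H).factorization p) :
    ∃ h ∈ H, ∀ x ∈ P, h * x * h⁻¹ ∈ Q := by
  let SP : Sylow p H := Sylow.ofCard (P.subgroupOf H) (by rw [card_subgroupOf_of_le hP, hPc])
  let SQ : Sylow p H := Sylow.ofCard (Q.subgroupOf H) (by rw [card_subgroupOf_of_le hQ, hQc])
  obtain ⟨h, hh⟩ := exists_smul_eq H SP SQ
  rw [Sylow.smul_def, Sylow.ext_iff, Sylow.pointwise_smul_def, pointwise_smul_def] at hh
  refine ⟨h, h.2, fun x hx => ?_⟩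
  have hxP : (⟨x, hP hx⟩ : H) ∈ (SP : Subgroup H) := mem_subgroupOf.mpr hx
  exact mem_subgroupOf.mp (hh ▸ mem_map_of_mem _ hxP)

theorem exists_isPGroup_lt_of_card_ne [Finite G] [Fact p.Prime] {T K : Subgroup G}
    (hT : IsPGroup p T) (hTK : T ≤ K) (hcard : Nat.card T ≠ p ^ (Nat.card K).factorization p) :
    ∃ Q : Subgroup G, IsPGroup p Q ∧ T < Q ∧ Q ≤ K := by
  obtain ⟨R, hR⟩ := (hT.comap_subtype (K := K)).exists_le_sylow
  have hTR : T = (T.subgroupOf K).map K.subtype := by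
    rw [subgroupOf_map_subtype, inf_of_le_left hTK]
  refine ⟨R.map K.subtype, R.2.map _, lt_of_le_of_ne (hTR ▸ map_mono hR) fun h => hcard ?_,
    map_subtype_le _⟩
  rw [h, card_map_of_injective K.subtype_injective, R.card_eq_multiplicity]

theorem exists_maximal_isPGroup_ne_bot [Finite G] (K : Subgroup G) (hp : p.Prime)
    (hpK : p ∣ Nat.card K) :
    ∃ T : Subgroup G, Maximal (fun U : Subgroup G => IsPGroup p U ∧ U ≤ K) T ∧ T ≠ ⊥ := by
  have := Fact.mk hp
  obtain ⟨x, hx⟩ := exists_prime_orderOf_dvd_card' p hpK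
  have hxp : IsPGroup p (zpowers (x : G)) :=
    IsPGroup.of_card (n := 1) (by rw [Nat.card_zpowers, orderOf_submonoid, hx, pow_one])
  obtain ⟨T, hxT, hT⟩ := Finite.exists_le_maximal
    (p := fun U : Subgroup G => IsPGroup p U ∧ U ≤ K) ⟨hxp, zpowers_le.mpr x.2⟩
  refine ⟨T, hT, fun hbot => hp.ne_one ?_⟩
  rw [← hx, ← orderOf_submonoid, orderOf_eq_one_iff, ← mem_bot, ← hbot]
  exact hxT (mem_zpowers _)

variable {Ω : Type*} [MulAction G Ω]

theorem fixingSubgroup_le_stabilizer_of_mem {s : Set Ω} {w : Ω} (hw : w ∈ s) :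
    fixingSubgroup G s ≤ stabilizer G w :=
  fun _ hg => (mem_fixingSubgroup_iff G).mp hg w hw

theorem ncard_orbit_dvd_card (H : Subgroup G) (w : Ω) : (orbit H w).ncard ∣ Nat.card G :=
  index_stabilizer H w ▸ (index_dvd_card _).trans (card_subgroup_dvd_card H)

theorem le_stabilizer_smul_of_mem_normalizer {T : Subgroup G} {n : G}
    (hn : n ∈ normalizer (T : Set G)) {w : Ω} (hw : T ≤ stabilizer G w) :
    T ≤ stabilizer G (n • w) := by
  rw [stabilizer_smul_eq_stabilizer_map_conj, ← mem_normalizer_iff_map_conj_eq.mp hn]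
  exact map_mono hw

-- Witt's lemma: `T` and a conjugate of it are both Sylow subgroups of `stabilizer G w'`.
theorem mem_orbit_normalizer_of_card_eq [Finite G] [Fact p.Prime] [IsPretransitive G Ω]
    {T : Subgroup G} {w w' : Ω} (hw : T ≤ stabilizer G w) (hw' : T ≤ stabilizer G w')
    (hcard : Nat.card T = p ^ (Nat.card (stabilizer G w)).factorization p) :
    w' ∈ orbit (normalizer (T : Set G)) w := by
  obtain ⟨g, rfl⟩ := exists_smul_eq G w w'
  have hstab := stabilizer_smul_eq_stabilizer_map_conj g w
  have hinj : Function.Injective (MulAut.conj g).toMonoidHom := (MulAut.conj g).injective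
  obtain ⟨h, hh, hconj⟩ := exists_conj_mem_of_card_eq (p := p) (stabilizer G (g • w))
    (P := T.map (MulAut.conj g).toMonoidHom) (hstab ▸ map_mono hw) hw'
    (by rw [card_map_of_injective hinj, hstab, card_map_of_injective hinj, hcard])
    (by rw [hstab, card_map_of_injective hinj, hcard])
  refine ⟨⟨h * g, mem_normalizer_fintype fun t ht => ?_⟩, mem_stabilizer_iff.mp hh ▸ mul_smul h g w⟩
  have := hconj _ (mem_map_of_mem _ ht)
  simpa [mul_assoc] using this

theorem mem_orbit_normalizer_of_card_ne [Finite G] [Fact p.Prime] {T : Subgroup G}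
    {w u v : Ω} (hwu : w ≠ u) (hwv : w ≠ v) (huv : u ≠ v)
    (hmax : Maximal (fun U : Subgroup G => IsPGroup p U ∧ U ≤ fixingSubgroup G {w, u, v}) T)
    (hfix : ∀ ω, T ≤ stabilizer G ω → ω ∈ ({w, u, v} : Set Ω))
    (hcard : Nat.card T ≠ p ^ (Nat.card (stabilizer G w)).factorization p) :
    v ∈ orbit (normalizer (T : Set G)) u := by
  obtain ⟨hT, hTfix⟩ := hmax.prop
  have hTstab {ω} (hω : ω ∈ ({w, u, v} : Set Ω)) : T ≤ stabilizer G ω :=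
    hTfix.trans (fixingSubgroup_le_stabilizer_of_mem hω)
  obtain ⟨Q, hQ, hTQ, hQw⟩ := exists_isPGroup_lt_of_card_ne hT (hTstab (by simp)) hcard
  have := hQ.isNilpotent
  obtain ⟨x, hxQ, hxN, hxT⟩ := exists_mem_normalizer_notMem_of_lt hTQ
  suffices hxuv : x • u = v from ⟨⟨x, hxN⟩, hxuv⟩
  by_contra hxuv
  apply hxT
  have hxw : x • w = w := hQw hxQ
  have hxu := hfix _ (le_stabilizer_smul_of_mem_normalizer hxN (hTstab (by simp : u ∈ _)))
  have hxv := hfix _ (le_stabilizer_smul_of_mem_normalizer hxN (hTstab (by simp : v ∈ _)))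
  -- `x` permutes `{w, u, v}`, fixes `w` and does not swap `u` and `v`
  have hxfix : x ∈ fixingSubgroup G {w, u, v} := by
    have hinj : Function.Injective (x • · : Ω → Ω) := MulAction.injective x
    simp only [mem_fixingSubgroup_iff, Set.mem_insert_iff, Set.mem_singleton_iff] at hxu hxv ⊢
    rintro y (rfl | rfl | rfl) <;> grind
  have hU : IsPGroup p ↥(T ⊔ zpowers x) ∧ T ⊔ zpowers x ≤ fixingSubgroup G {w, u, v} :=
    ⟨hQ.to_le (sup_le hTQ.le (zpowers_le.mpr hxQ)), sup_le hTfix (zpowers_le.mpr hxfix)⟩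
  exact hmax.eq_of_ge hU le_sup_left ▸ mem_sup_right (mem_zpowers x)

theorem orbit_normalizer_eq [Finite G] [Fact p.Prime] [IsPretransitive G Ω] {T : Subgroup G}
    {a b c : Ω} (hab : a ≠ b) (hac : a ≠ c) (hbc : b ≠ c)
    (hmax : Maximal (fun U : Subgroup G => IsPGroup p U ∧ U ≤ fixingSubgroup G {a, b, c}) T)
    (hfix : ∀ ω, T ≤ stabilizer G ω → ω ∈ ({a, b, c} : Set Ω)) :
    orbit (normalizer (T : Set G)) a = {a, b, c} := by
  have hTstab {ω} (hω : ω ∈ ({a, b, c} : Set Ω)) : T ≤ stabilizer G ω :=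
    hmax.prop.2.trans (fixingSubgroup_le_stabilizer_of_mem hω)
  have hTa := hTstab (by simp : a ∈ _)
  have hTb := hTstab (by simp : b ∈ _)
  have hTc := hTstab (by simp : c ∈ _)
  set N := normalizer (T : Set G)
  refine subset_antisymm ?_ ?_
  · rintro _ ⟨n, rfl⟩
    exact hfix _ (le_stabilizer_smul_of_mem_normalizer n.2 hTa)
  suffices b ∈ orbit N a ∧ c ∈ orbit N a by
    simpa [Set.insert_subset_iff, mem_orbit_self] using this
  by_cases hA : Nat.card T = p ^ (Nat.card (stabilizer G a)).factorization p
  · exact ⟨mem_orbit_normalizer_of_card_eq hTa hTb hA,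
      mem_orbit_normalizer_of_card_eq hTa hTc hA⟩
  by_cases hB : Nat.card T = p ^ (Nat.card (stabilizer G b)).factorization p
  · rw [orbit_eq_iff.mpr (mem_orbit_normalizer_of_card_eq hTb hTa hB)]
    exact ⟨mem_orbit_self b, mem_orbit_normalizer_of_card_eq hTb hTc hB⟩
  have hb : b ∈ orbit N c := mem_orbit_normalizer_of_card_ne hac hab hbc.symm
    (by rwa [Set.pair_comm]) (by rwa [Set.pair_comm]) hA
  have hc : c ∈ orbit N a := mem_orbit_normalizer_of_card_ne hab.symm hbc hac
    (by rwa [Set.insert_comm]) (by rwa [Set.insert_comm]) hB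
  exact ⟨orbit_eq_iff.mpr hc ▸ hb, hc⟩

end

theorem three_dvd_card_of_hyp3fix_general (G : Type*) [Group G] [Finite G]
    (Ω : Type*) [MulAction G Ω] (h : Hyp3fix G Ω) :
    3 ∣ Nat.card G := by
  obtain ⟨htrans, -, h4, t, ht, a, b, c, hab, hac, hbc, hta, htb, htc⟩ := h
  have htP : t ∈ fixingSubgroup G {a, b, c} := by simp [mem_fixingSubgroup_iff, hta, htb, htc]
  have hp := Nat.minFac_prime ((fixingSubgroup G {a, b, c}).one_lt_card_iff_ne_bot.mpr
    ((ne_bot_iff_exists_ne_one).mpr ⟨⟨t, htP⟩, by simpa using ht⟩)).ne'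
  have := Fact.mk hp
  obtain ⟨T, hmax, hT⟩ := exists_maximal_isPGroup_ne_bot _ hp (Nat.minFac_dvd _)
  obtain ⟨s, hs⟩ := (ne_bot_iff_exists_ne_one).mp hT
  have hfix : ∀ ω, T ≤ stabilizer G ω → ω ∈ ({a, b, c} : Set Ω) := by
    intro ω hω
    by_contra hω'
    have hs' := (mem_fixingSubgroup_iff G).mp (hmax.prop.2 s.2)
    simp only [Set.mem_insert_iff, Set.mem_singleton_iff, not_or] at hω'
    exact hs (Subtype.ext (h4 s a b c ω hab hac (Ne.symm hω'.1) hbc (Ne.symm hω'.2.1)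
      (Ne.symm hω'.2.2) (hs' a (by simp)) (hs' b (by simp)) (hs' c (by simp)) (hω s.2)))
  have horb := orbit_normalizer_eq hab hac hbc hmax hfix
  have h3 : ({a, b, c} : Set Ω).ncard = 3 := Set.ncard_eq_three.mpr ⟨a, b, c, hab, hac, hbc, rfl⟩
  exact h3 ▸ horb ▸ ncard_orbit_dvd_card _ a

/-- If the finite group `G` acts on the finite set `Ω` and `(G, Ω)` satisfies
Hypothesis (3fix), then `3` divides the order of `G`. -/
theorem three_dvd_card_of_hyp3fix (G : Type*) [Group G] [Finite G]
    (Ω : Type*) [Finite Ω] [MulAction G Ω] (h : Hyp3fix G Ω) :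
    3 ∣ Nat.card G :=
  three_dvd_card_of_hyp3fix_general G Ω h
end
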